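/- arXiv:math/0509243 — 9 statements merged into one kernel-verified Lean document; each statement's English description precedes it below -/
import Mathlib

section
/- Let p be a prime, let n, r ≥ 1, let v_1, …, v_r ∈ ℤ^n be linearly independent over ℚ, let w ∈ ℤ^n, and let ℓ_1, ℓ_2 ∈ ℤ^n be integer linear functionals (acting by dot product) such that ⟨ℓ_1, v_i⟩ ≥ 0 and ⟨ℓ_2, v_i⟩ > 0 for every i. Set S = { w + a_1 v_1 + ⋯ + a_r v_r : a ∈ ℕ^r } ⊆ ℤ^n. Then for every s ∈ ℂ with Re(s) > 0, the family v ∈ S ↦ p^{-(⟨ℓ_1,v⟩ s + ⟨ℓ_2,v⟩)} is summable and its sum equals p^{-(⟨ℓ_1,w⟩ s + ⟨ℓ_2,w⟩)} · ∏_{i=1}^{r} (1 - p^{-(⟨ℓ_1,v_i⟩ s + ⟨ℓ_2,v_i⟩)})^{-1}. -/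
set_option maxHeartbeats 1000000

open Complex in
private lemma cpow_finset_sum {x : ℂ} (hx : x ≠ 0) {ι : Type*} (t : Finset ι) (f : ι → ℂ) :
    x ^ (∑ j ∈ t, f j) = ∏ j ∈ t, x ^ f j := by
  classical
  induction t using Finset.induction_on with
  | empty => simp
  | insert a t h ih =>
    rw [Finset.sum_insert h, Finset.prod_insert h, Complex.cpow_add _ _ hx, ih]

private lemma geom_pi (r : ℕ) (q : Fin r → ℂ) (hq : ∀ j, ‖q j‖ < 1) :
    Summable (fun a : Fin r → ℕ => ‖∏ j, q j ^ a j‖) ∧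
    ∑' a : Fin r → ℕ, ∏ j, q j ^ a j = ∏ j, (1 - q j)⁻¹ := by
  induction r with
  | zero =>
    haveI : Subsingleton (Fin 0 → ℕ) := ⟨fun a b => funext fun i => i.elim0⟩
    haveI : Finite (Fin 0 → ℕ) := Finite.of_subsingleton
    constructor
    · exact Summable.of_finite
    · rw [tsum_eq_single (fun _ => 0) (fun b hb => absurd (Subsingleton.elim b _) hb)]
      simp
  | succ r ih =>
    obtain ⟨ihs, iht⟩ := ih (fun j => q j.succ) (fun j => hq j.succ)
    set e : ℕ × (Fin r → ℕ) ≃ (Fin (r + 1) → ℕ) := Fin.consEquiv fun _ => ℕ with he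
    have key : ∀ x : ℕ × (Fin r → ℕ),
        (∏ j, q j ^ (e x) j) = q 0 ^ x.1 * ∏ j, q j.succ ^ x.2 j := by
      intro x
      rw [Fin.prod_univ_succ]
      simp [he, Fin.consEquiv]
    have hf0 : Summable (fun m : ℕ => ‖q 0 ^ m‖) := by
      simpa [norm_pow] using summable_geometric_of_lt_one (norm_nonneg (q 0)) (hq 0)
    have hmul := hf0.mul_norm ihs
    have hcomp : Summable (fun x : ℕ × (Fin r → ℕ) => ‖∏ j, q j ^ (e x) j‖) := by
      refine hmul.congr fun x => ?_
      rw [key]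
    constructor
    · exact (e.summable_iff (f := fun a : Fin (r + 1) → ℕ => ‖∏ j, q j ^ a j‖)).mp hcomp
    · have st1 : ∑' a : Fin (r + 1) → ℕ, ∏ j, q j ^ a j
          = ∑' x : ℕ × (Fin r → ℕ), ∏ j, q j ^ (e x) j :=
        (e.tsum_eq (fun a : Fin (r + 1) → ℕ => ∏ j, q j ^ a j)).symm
      have st2 : ∑' x : ℕ × (Fin r → ℕ), ∏ j, q j ^ (e x) j
          = ∑' x : ℕ × (Fin r → ℕ), q 0 ^ x.1 * ∏ j, q j.succ ^ x.2 j := tsum_congr key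
      have st3 : ∑' x : ℕ × (Fin r → ℕ), q 0 ^ x.1 * ∏ j, q j.succ ^ x.2 j
          = (∑' m : ℕ, q 0 ^ m) * ∑' a : Fin r → ℕ, ∏ j, q j.succ ^ a j :=
        (tsum_mul_tsum_of_summable_norm hf0 ihs).symm
      have st4 : (∑' m : ℕ, q 0 ^ m) = (1 - q 0)⁻¹ := tsum_geometric_of_norm_lt_one (hq 0)
      rw [st1, st2, st3, st4, iht, Fin.prod_univ_succ fun j => (1 - q j)⁻¹]

/-- Igusa-type zeta function of a translated simplicial semigroup (Lemma 3.1):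
summability on the half-plane `Re s > 0` and the explicit product formula. -/
theorem igusa_zeta_translated_semigroup
    (p : ℕ) (hp : p.Prime) (n r : ℕ) (hn : 1 ≤ n) (hr : 1 ≤ r)
    (v : Fin r → Fin n → ℤ)
    (hv : LinearIndependent ℚ (fun j => fun i => (v j i : ℚ)))
    (w ℓ₁ ℓ₂ : Fin n → ℤ)
    (h1 : ∀ j, 0 ≤ ∑ i, ℓ₁ i * v j i)
    (h2 : ∀ j, 0 < ∑ i, ℓ₂ i * v j i)
    (S : Set (Fin n → ℤ))
    (hS : S = {x | ∃ a : Fin r → ℕ, x = w + ∑ j, (a j : ℤ) • v j})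
    (s : ℂ) (hs : 0 < s.re) :
    Summable (fun x : S =>
      (p : ℂ) ^ (-(((∑ i, ℓ₁ i * (x : Fin n → ℤ) i : ℤ) : ℂ) * s
        + ((∑ i, ℓ₂ i * (x : Fin n → ℤ) i : ℤ) : ℂ)))) ∧
    ∑' x : S, (p : ℂ) ^ (-(((∑ i, ℓ₁ i * (x : Fin n → ℤ) i : ℤ) : ℂ) * s
        + ((∑ i, ℓ₂ i * (x : Fin n → ℤ) i : ℤ) : ℂ))) =
      (p : ℂ) ^ (-(((∑ i, ℓ₁ i * w i : ℤ) : ℂ) * s + ((∑ i, ℓ₂ i * w i : ℤ) : ℂ))) *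
      ∏ j, (1 - (p : ℂ) ^ (-(((∑ i, ℓ₁ i * v j i : ℤ) : ℂ) * s
        + ((∑ i, ℓ₂ i * v j i : ℤ) : ℂ))))⁻¹ := by
  classical
  have hp0 : (p : ℂ) ≠ 0 := Nat.cast_ne_zero.mpr hp.pos.ne'
  -- the summand as a function, the geometric ratios and the constant
  set F : S → ℂ := fun x =>
    (p : ℂ) ^ (-(((∑ i, ℓ₁ i * (x : Fin n → ℤ) i : ℤ) : ℂ) * s
      + ((∑ i, ℓ₂ i * (x : Fin n → ℤ) i : ℤ) : ℂ))) with hF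
  set q : Fin r → ℂ := fun j =>
    (p : ℂ) ^ (-(((∑ i, ℓ₁ i * v j i : ℤ) : ℂ) * s + ((∑ i, ℓ₂ i * v j i : ℤ) : ℂ))) with hq
  set C : ℂ :=
    (p : ℂ) ^ (-(((∑ i, ℓ₁ i * w i : ℤ) : ℂ) * s + ((∑ i, ℓ₂ i * w i : ℤ) : ℂ))) with hC
  -- the parametrization of S
  have memS : ∀ a : Fin r → ℕ, (w + ∑ j, (a j : ℤ) • v j) ∈ S := by
    intro a; rw [hS]; exact ⟨a, rfl⟩
  set g : (Fin r → ℕ) → S := fun a => ⟨w + ∑ j, (a j : ℤ) • v j, memS a⟩ with hg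
  have hinj : Function.Injective g := by
    intro a b hab
    have h0 : (∑ j, (a j : ℤ) • v j) = ∑ j, (b j : ℤ) • v j := by
      have := congrArg Subtype.val hab
      simpa [hg] using this
    have hq0 : (∑ j, ((a j : ℚ) - (b j : ℚ)) • (fun i => (v j i : ℚ))) = 0 := by
      funext i
      have h0i := congrFun h0 i
      simp only [Finset.sum_apply, Pi.smul_apply, smul_eq_mul] at h0i ⊢
      have h0q : (∑ j, (a j : ℚ) * (v j i : ℚ)) = ∑ j, (b j : ℚ) * (v j i : ℚ) := by
        exact_mod_cast h0i
      simp [sub_mul, Finset.sum_sub_distrib, h0q, Pi.zero_apply]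
    have hz := Fintype.linearIndependent_iff.mp hv (fun j => (a j : ℚ) - (b j : ℚ)) hq0
    funext j
    have := sub_eq_zero.mp (hz j)
    exact_mod_cast this
  have hsurj : Function.Surjective g := by
    rintro ⟨x, hx⟩
    rw [hS] at hx
    obtain ⟨a, ha⟩ := hx
    exact ⟨a, Subtype.ext ha.symm⟩
  set e : (Fin r → ℕ) ≃ S := Equiv.ofBijective g ⟨hinj, hsurj⟩ with he
  -- linear functional computation
  have hL : ∀ (ℓ : Fin n → ℤ) (a : Fin r → ℕ),
      (∑ i, ℓ i * (w + ∑ j, (a j : ℤ) • v j) i)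
        = ∑ i, ℓ i * w i + ∑ j, (a j : ℤ) * ∑ i, ℓ i * v j i := by
    intro ℓ a
    simp only [Pi.add_apply, Finset.sum_apply, Pi.smul_apply, smul_eq_mul, mul_add,
      Finset.sum_add_distrib, Finset.mul_sum]
    congr 1
    rw [Finset.sum_comm]
    exact Finset.sum_congr rfl fun j _ => Finset.sum_congr rfl fun i _ => by ring
  -- the key term identity
  have hterm : ∀ a : Fin r → ℕ, F (g a) = C * ∏ j, q j ^ a j := by
    intro a
    have hx : ((g a : Fin n → ℤ)) = w + ∑ j, (a j : ℤ) • v j := rfl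
    have hexp :
        -(((∑ i, ℓ₁ i * (g a : Fin n → ℤ) i : ℤ) : ℂ) * s
          + ((∑ i, ℓ₂ i * (g a : Fin n → ℤ) i : ℤ) : ℂ))
        = (-(((∑ i, ℓ₁ i * w i : ℤ) : ℂ) * s + ((∑ i, ℓ₂ i * w i : ℤ) : ℂ)))
          + ∑ j, ((a j : ℕ) : ℂ) *
            (-(((∑ i, ℓ₁ i * v j i : ℤ) : ℂ) * s + ((∑ i, ℓ₂ i * v j i : ℤ) : ℂ))) := by
      rw [hx, hL ℓ₁ a, hL ℓ₂ a]
      push_cast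
      have hsum1 : ∑ j, (a j : ℂ) *
          -((∑ i, (ℓ₁ i : ℂ) * (v j i : ℂ)) * s + ∑ i, (ℓ₂ i : ℂ) * (v j i : ℂ))
          = -((∑ j, (a j : ℂ) * ∑ i, (ℓ₁ i : ℂ) * (v j i : ℂ)) * s
              + ∑ j, (a j : ℂ) * ∑ i, (ℓ₂ i : ℂ) * (v j i : ℂ)) := by
        rw [neg_add, Finset.sum_mul, ← Finset.sum_neg_distrib, ← Finset.sum_neg_distrib,
          ← Finset.sum_add_distrib]
        exact Finset.sum_congr rfl fun j _ => by ring
      rw [hsum1]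
      ring
    simp only [hF]
    rw [hexp, Complex.cpow_add _ _ hp0, cpow_finset_sum hp0]
    refine congrArg₂ (· * ·) rfl ?_
    refine Finset.prod_congr rfl fun j _ => ?_
    rw [Complex.cpow_nat_mul]
  -- norms of ratios are < 1
  have hqlt : ∀ j, ‖q j‖ < 1 := by
    intro j
    have hp1 : (1 : ℝ) < (p : ℝ) := by exact_mod_cast hp.one_lt
    have hppos : (0 : ℝ) < (p : ℝ) := lt_trans one_pos hp1
    have hre : (-(((∑ i, ℓ₁ i * v j i : ℤ) : ℂ) * s
        + ((∑ i, ℓ₂ i * v j i : ℤ) : ℂ))).re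
        = -(((∑ i, ℓ₁ i * v j i : ℤ) : ℝ) * s.re + ((∑ i, ℓ₂ i * v j i : ℤ) : ℝ)) := by
      simp [Complex.add_re, Complex.mul_re]
    have hneg : (-(((∑ i, ℓ₁ i * v j i : ℤ) : ℝ) * s.re
        + ((∑ i, ℓ₂ i * v j i : ℤ) : ℝ))) < 0 := by
      have hA : (0 : ℝ) ≤ ((∑ i, ℓ₁ i * v j i : ℤ) : ℝ) := by exact_mod_cast h1 j
      have hB : (0 : ℝ) < ((∑ i, ℓ₂ i * v j i : ℤ) : ℝ) := by exact_mod_cast h2 j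
      nlinarith [mul_nonneg hA hs.le]
    rw [hq]
    calc ‖(p : ℂ) ^ (-(((∑ i, ℓ₁ i * v j i : ℤ) : ℂ) * s + ((∑ i, ℓ₂ i * v j i : ℤ) : ℂ)))‖
        = (p : ℝ) ^ ((-(((∑ i, ℓ₁ i * v j i : ℤ) : ℂ) * s
            + ((∑ i, ℓ₂ i * v j i : ℤ) : ℂ))).re) := by
          rw [← Complex.ofReal_natCast,
            Complex.norm_cpow_eq_rpow_re_of_pos hppos]
      _ < 1 := by
          rw [hre]
          exact Real.rpow_lt_one_of_one_lt_of_neg hp1 hneg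
  obtain ⟨hsummable, htsum⟩ := geom_pi r q hqlt
  have hFcomp : Summable (fun a : Fin r → ℕ => F (e a)) := by
    refine Summable.congr ((hsummable.of_norm).mul_left C) fun a => ?_
    exact (hterm a).symm
  constructor
  · exact (e.summable_iff (f := F)).mp hFcomp
  · calc ∑' x : S, F x = ∑' a : Fin r → ℕ, F (e a) := (e.tsum_eq F).symm
      _ = ∑' a : Fin r → ℕ, C * ∏ j, q j ^ a j := tsum_congr fun a => hterm a
      _ = C * ∑' a : Fin r → ℕ, ∏ j, q j ^ a j := tsum_mul_left
      _ = C * ∏ j, (1 - q j)⁻¹ := by rw [htsum]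
end

section
/- Let v_1, …, v_r ∈ ℤ^n be linearly independent over ℚ and let S be the additive submonoid of ℤ^n generated by v_1, …, v_r. Let w_j, w_k ∈ ℤ^n. If there exist integers a_1, …, a_r with w_j − w_k = Σ_{i=1}^r a_i v_i, then (w_j + S) ∩ (w_k + S) = w + S, where w = w_j + Σ_{i=1}^r max(0, −a_i) v_i. If no such integers exist, then (w_j + S) ∩ (w_k + S) = ∅. -/
/-- Uniqueness of integer coefficients for ℚ-linearly independent vectors. -/
theorem uniq_coeffs_aux (n r : ℕ) (v : Fin r → Fin n → ℤ)
    (hv : LinearIndependent ℚ (fun j => fun i => (v j i : ℚ)))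
    (a b : Fin r → ℤ) (hab : ∑ i, a i • v i = ∑ i, b i • v i) : a = b := by
  have h := Fintype.linearIndependent_iff.mp hv (fun i => (a i : ℚ) - (b i : ℚ)) ?_
  · funext i
    have hi := h i
    have : (a i : ℚ) = (b i : ℚ) := by linarith [sub_eq_zero.mp hi]
    exact_mod_cast this
  · funext k
    have h := congrFun hab k
    simp only [Finset.sum_apply, Pi.smul_apply, smul_eq_mul, zsmul_eq_mul] at h ⊢
    have h2 : ((∑ i, a i * v i k : ℤ) : ℚ) = ((∑ i, b i * v i k : ℤ) : ℚ) := by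
      exact_mod_cast h
    push_cast at h2
    simp only [sub_mul, Finset.sum_sub_distrib, h2, sub_self, Pi.zero_apply]

/-- Membership in the closure as a nonnegative integer combination. -/
theorem mem_closure_aux (n r : ℕ) (v : Fin r → Fin n → ℤ) (u : Fin n → ℤ) :
    u ∈ AddSubmonoid.closure (Set.range v) ↔
      ∃ c : Fin r → ℤ, (∀ i, 0 ≤ c i) ∧ u = ∑ i, c i • v i := by
  constructor
  · intro hu
    induction hu using AddSubmonoid.closure_induction with
    | mem x hx =>
      obtain ⟨j, rfl⟩ := hx
      refine ⟨fun i => if i = j then 1 else 0, fun i => by by_cases h : i = j <;> simp [h], ?_⟩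
      simp [ite_smul]
    | zero => exact ⟨0, fun i => le_refl 0, by simp⟩
    | add x y hx hy ihx ihy =>
      obtain ⟨c, hc, rfl⟩ := ihx
      obtain ⟨d, hd, rfl⟩ := ihy
      exact ⟨c + d, fun i => add_nonneg (hc i) (hd i), by
        simp [add_smul, Finset.sum_add_distrib]⟩
  · rintro ⟨c, hc, rfl⟩
    refine AddSubmonoid.sum_mem _ fun i _ => ?_
    have : c i • v i = (c i).toNat • v i := by
      rw [← natCast_zsmul, Int.toNat_of_nonneg (hc i)]
    rw [this]
    exact AddSubmonoid.nsmul_mem _ (AddSubmonoid.subset_closure (Set.mem_range_self i)) _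

/-- Intersection of two translates of the semigroup generated by linearly
independent lattice vectors: either a translate of the semigroup or empty. -/
theorem inter_translates_semigroup
    (n r : ℕ) (v : Fin r → Fin n → ℤ)
    (hv : LinearIndependent ℚ (fun j => fun i => (v j i : ℚ)))
    (S : AddSubmonoid (Fin n → ℤ))
    (hS : S = AddSubmonoid.closure (Set.range v))
    (w_j w_k : Fin n → ℤ) :
    (∀ a : Fin r → ℤ, w_j - w_k = ∑ i, a i • v i →
      {x | ∃ u ∈ S, x = w_j + u} ∩ {x | ∃ u ∈ S, x = w_k + u} =
        {x | ∃ u ∈ S, x = (w_j + ∑ i, max 0 (-a i) • v i) + u}) ∧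
    ((¬ ∃ a : Fin r → ℤ, w_j - w_k = ∑ i, a i • v i) →
      {x | ∃ u ∈ S, x = w_j + u} ∩ {x | ∃ u ∈ S, x = w_k + u} = ∅) := by
  subst hS
  have hmem := mem_closure_aux n r v
  have huniq := uniq_coeffs_aux n r v hv
  constructor
  · intro a ha
    ext x
    simp only [Set.mem_inter_iff, Set.mem_setOf_eq]
    constructor
    · rintro ⟨⟨u1, hu1, rfl⟩, ⟨u2, hu2, hx2⟩⟩
      obtain ⟨b, hb, rfl⟩ := (hmem u1).mp hu1
      obtain ⟨c, hc, rfl⟩ := (hmem u2).mp hu2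
      have key : (fun i => a i + b i) = c := by
        apply huniq
        have h1 : ∑ i, (a i + b i) • v i = (w_j - w_k) + ∑ i, b i • v i := by
          simp [add_smul, Finset.sum_add_distrib, ha]
        have h2 : ∑ i, c i • v i = (w_j - w_k) + ∑ i, b i • v i := by
          linear_combination -hx2
        rw [h1, h2]
      refine ⟨∑ i, (b i - max 0 (-a i)) • v i,
        (hmem _).mpr ⟨_, fun i => ?_, rfl⟩, ?_⟩
      · have hci : 0 ≤ a i + b i := by rw [show a i + b i = c i from congrFun key i]; exact hc i
        have := hb i
        simp only [sub_nonneg, le_max_iff, max_le_iff]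
        omega
      · simp only [sub_smul, Finset.sum_sub_distrib]
        abel
    · rintro ⟨u, hu, rfl⟩
      obtain ⟨c, hc, rfl⟩ := (hmem u).mp hu
      constructor
      · refine ⟨∑ i, (max 0 (-a i) + c i) • v i,
          (hmem _).mpr ⟨_, fun i => add_nonneg (le_max_left _ _) (hc i), rfl⟩, ?_⟩
        simp only [add_smul, Finset.sum_add_distrib]
        abel
      · refine ⟨∑ i, (a i + max 0 (-a i) + c i) • v i,
          (hmem _).mpr ⟨_, fun i => ?_, rfl⟩, ?_⟩
        · have := hc i
          rcases le_total 0 (a i) with h | h <;> simp [max_eq_left, max_eq_right] <;> omega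
        · simp only [add_smul, Finset.sum_add_distrib]
          have : w_j = w_k + (w_j - w_k) := by abel
          rw [this, ha]
          abel
  · intro hne
    ext x
    simp only [Set.mem_inter_iff, Set.mem_setOf_eq, Set.mem_empty_iff_false, iff_false]
    rintro ⟨⟨u1, hu1, rfl⟩, ⟨u2, hu2, hx2⟩⟩
    obtain ⟨b, hb, rfl⟩ := (hmem u1).mp hu1
    obtain ⟨c, hc, rfl⟩ := (hmem u2).mp hu2
    refine hne ⟨fun i => c i - b i, ?_⟩
    have : w_j - w_k = ∑ i, c i • v i - ∑ i, b i • v i := by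
      linear_combination hx2
    rw [this]
    simp [sub_smul, Finset.sum_sub_distrib]
end

section
/- Let v_1, …, v_r ∈ ℤ^n be linearly independent over ℚ, let σ = { t_1 v_1 + ⋯ + t_r v_r : t_i ∈ ℝ, t_i ≥ 0 } ⊆ ℝ^n be the simplicial cone they generate, and let S be the additive submonoid of ℤ^n generated by v_1, …, v_r. Then there exists a finite set W ⊆ ℤ^n, with every element of W lying in σ, such that { v ∈ ℤ^n : v ∈ σ } = ⋃_{w ∈ W} (w + S). -/
/-- The lattice points of a simplicial cone are covered by finitely many
translates of the semigroup generated by the primitive ray generators. -/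
theorem lattice_points_of_simplicial_cone_covered
    (n r : ℕ) (v : Fin r → Fin n → ℤ)
    (hv : LinearIndependent ℝ (fun j => fun i => (v j i : ℝ)))
    (σ : Set (Fin n → ℝ))
    (hσ : σ = {x | ∃ t : Fin r → ℝ, (∀ j, 0 ≤ t j) ∧
      x = ∑ j, t j • (fun i => (v j i : ℝ))})
    (S : AddSubmonoid (Fin n → ℤ))
    (hS : S = AddSubmonoid.closure (Set.range v)) :
    ∃ W : Finset (Fin n → ℤ),
      (∀ w ∈ W, (fun i => (w i : ℝ)) ∈ σ) ∧
      {x : Fin n → ℤ | (fun i => (x i : ℝ)) ∈ σ} =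
        ⋃ w ∈ W, {x | ∃ u ∈ S, x = w + u} := by
  subst hσ hS
  -- the half-open box
  set B : Set (Fin n → ℤ) := {w | ∃ s : Fin r → ℝ,
    (∀ j, 0 ≤ s j ∧ s j < 1) ∧
    (fun i => (w i : ℝ)) = ∑ j, s j • (fun i => (v j i : ℝ))} with hB
  have hBfin : B.Finite := by
    apply Set.Finite.subset (Finset.finite_toSet
      (Fintype.piFinset fun i => Finset.Icc (-(∑ j, |v j i|)) (∑ j, |v j i|)))
    rintro w ⟨s, hs, hw⟩
    rw [Finset.mem_coe, Fintype.mem_piFinset]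
    intro i
    rw [Finset.mem_Icc, ← abs_le]
    have hwi : (w i : ℝ) = ∑ j, s j * (v j i : ℝ) := by
      have := congrFun hw i
      simpa [Finset.sum_apply] using this
    have h1 : |(w i : ℝ)| ≤ ∑ j, |(v j i : ℝ)| := by
      rw [hwi]
      refine (Finset.abs_sum_le_sum_abs _ _).trans (Finset.sum_le_sum fun j _ => ?_)
      rw [abs_mul]
      calc |s j| * |(v j i : ℝ)| ≤ 1 * |(v j i : ℝ)| := by
            apply mul_le_mul_of_nonneg_right _ (abs_nonneg _)
            rw [abs_of_nonneg (hs j).1]; exact le_of_lt (hs j).2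
        _ = |(v j i : ℝ)| := one_mul _
    have : |((w i : ℤ) : ℝ)| ≤ ((∑ j, |v j i| : ℤ) : ℝ) := by push_cast; exact h1
    exact_mod_cast this
  refine ⟨hBfin.toFinset, ?_, ?_⟩
  · intro w hw
    rw [Set.Finite.mem_toFinset] at hw
    obtain ⟨s, hs, hw⟩ := hw
    exact ⟨s, fun j => (hs j).1, hw⟩
  · -- characterization of S
    have hSmem : ∀ u ∈ AddSubmonoid.closure (Set.range v),
        ∃ m : Fin r → ℕ, u = ∑ j, m j • v j := by
      intro u hu
      induction hu using AddSubmonoid.closure_induction with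
      | mem x hx =>
          obtain ⟨j, rfl⟩ := hx
          exact ⟨Pi.single j 1, by simp [Pi.single_apply, ite_smul]⟩
      | zero => exact ⟨0, by simp⟩
      | add a b _ _ ha hb =>
          obtain ⟨ma, rfl⟩ := ha
          obtain ⟨mb, rfl⟩ := hb
          exact ⟨ma + mb, by rw [← Finset.sum_add_distrib]; simp [add_smul]⟩
    ext x
    simp only [Set.mem_setOf_eq, Set.mem_iUnion, Set.Finite.mem_toFinset]
    constructor
    · rintro ⟨t, ht, hx⟩
      set m : Fin r → ℕ := fun j => (⌊t j⌋).toNat with hm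
      set u : Fin n → ℤ := ∑ j, m j • v j with hu
      have huS : u ∈ AddSubmonoid.closure (Set.range v) :=
        AddSubmonoid.sum_mem _ fun j _ =>
          AddSubmonoid.nsmul_mem _ (AddSubmonoid.subset_closure (Set.mem_range_self j)) _
      have hmc : ∀ j, ((m j : ℤ) : ℝ) = (⌊t j⌋ : ℝ) := fun j => by
        simp [hm, Int.toNat_of_nonneg (Int.floor_nonneg.mpr (ht j))]
      have hwB : x - u ∈ B := by
        rw [hB, Set.mem_setOf_eq]
        refine ⟨fun j => Int.fract (t j),
          fun j => ⟨Int.fract_nonneg _, Int.fract_lt_one _⟩, ?_⟩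
        funext i
        have hxi : (x i : ℝ) = ∑ j, t j * (v j i : ℝ) := by
          have := congrFun hx i
          simpa [Finset.sum_apply] using this
        have hui : ((u i : ℤ) : ℝ) = ∑ j, (⌊t j⌋ : ℝ) * (v j i : ℝ) := by
          rw [hu]
          push_cast [Finset.sum_apply]
          exact Finset.sum_congr rfl fun j _ => by
            rw [← hmc j, Pi.smul_apply, nsmul_eq_mul]; push_cast; ring
        simp only [Finset.sum_apply, Pi.smul_apply, smul_eq_mul, Pi.sub_apply]
        push_cast
        rw [hxi, hui, ← Finset.sum_sub_distrib]
        exact Finset.sum_congr rfl fun j _ => by rw [Int.fract]; ring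
      exact ⟨x - u, hwB, u, huS, by abel⟩
    · rintro ⟨w, ⟨s, hs, hw⟩, u, huS, rfl⟩
      obtain ⟨m, rfl⟩ := hSmem u huS
      refine ⟨fun j => s j + m j, fun j => add_nonneg (hs j).1 (Nat.cast_nonneg _), ?_⟩
      funext i
      have hwi : (w i : ℝ) = ∑ j, s j * (v j i : ℝ) := by
        have := congrFun hw i
        simpa [Finset.sum_apply] using this
      simp only [Finset.sum_apply, Pi.smul_apply, smul_eq_mul, Pi.add_apply]
      push_cast [Finset.sum_apply]
      rw [hwi, ← Finset.sum_add_distrib]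
      exact Finset.sum_congr rfl fun j _ => by
        simp only [Pi.smul_apply, nsmul_eq_mul, smul_eq_mul]; push_cast; ring
end

section
/- Let p be a prime, let G ⊆ ℤ^n be a finite set, and let σ ⊆ ℝ^n be the cone of all nonnegative real combinations of elements of G. Let ℓ_1, ℓ_2 ∈ ℤ^n be integer linear functionals such that ⟨ℓ_1, x⟩ ≥ 0 and ⟨ℓ_2, x⟩ ≥ 0 for every x ∈ σ, and such that the only x ∈ σ with ⟨ℓ_2, x⟩ = 0 is x = 0. Then for every s ∈ ℂ with Re(s) > 0, the family v ∈ σ ∩ ℤ^n ↦ p^{-(⟨ℓ_1,v⟩ s + ⟨ℓ_2,v⟩)} is summable. -/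
open Real Finset

lemma igusa_aux_geom_int {r : ℝ} (h0 : 0 ≤ r) (h1 : r < 1) :
    Summable (fun z : ℤ => r ^ z.natAbs) := by
  have hn : Summable (fun k : ℕ => r ^ k) := summable_geometric_of_lt_one h0 h1
  refine Summable.of_nat_of_neg ?_ ?_ <;> simpa using hn

lemma igusa_aux_prod_geom (n : ℕ) {r : ℝ} (h0 : 0 ≤ r) (h1 : r < 1) :
    Summable (fun v : Fin n → ℤ => ∏ i, r ^ (v i).natAbs) := by
  induction n with
  | zero =>
      simpa using (summable_of_finite_support
        (Set.Finite.subset Set.finite_univ (Set.subset_univ _)))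
  | succ n ih =>
      have h := (igusa_aux_geom_int h0 h1).mul_of_nonneg ih
        (fun z => pow_nonneg h0 _)
        (fun v => Finset.prod_nonneg fun i _ => pow_nonneg h0 _)
      have := h.comp_injective (Fin.consEquiv (fun _ => ℤ)).symm.injective
      refine this.congr fun v => ?_
      simp [Fin.consEquiv, Fin.prod_univ_succ, Fin.tail]

/-- Summability of the Igusa-type zeta family attached to a rational polyhedral
cone on the half-plane `Re s > 0`. -/
theorem igusa_zeta_cone_summable
    (p : ℕ) (hp : p.Prime) (n : ℕ) (G : Finset (Fin n → ℤ))
    (σ : Set (Fin n → ℝ))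
    (hσ : σ = {x | ∃ c : (Fin n → ℤ) → ℝ, (∀ g, 0 ≤ c g) ∧
      x = ∑ g ∈ G, c g • (fun i => (g i : ℝ))})
    (ℓ₁ ℓ₂ : Fin n → ℤ)
    (h1 : ∀ x ∈ σ, 0 ≤ ∑ i, (ℓ₁ i : ℝ) * x i)
    (h2 : ∀ x ∈ σ, 0 ≤ ∑ i, (ℓ₂ i : ℝ) * x i)
    (h2' : ∀ x ∈ σ, ∑ i, (ℓ₂ i : ℝ) * x i = 0 → x = 0)
    (s : ℂ) (hs : 0 < s.re) :
    Summable (fun v : {v : Fin n → ℤ // (fun i => (v i : ℝ)) ∈ σ} =>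
      (p : ℂ) ^ (-(((∑ i, ℓ₁ i * (v : Fin n → ℤ) i : ℤ) : ℂ) * s
        + ((∑ i, ℓ₂ i * (v : Fin n → ℤ) i : ℤ) : ℂ)))) := by
  have hp1 : (1:ℝ) < p := by exact_mod_cast hp.one_lt
  have hp0 : (0:ℝ) < p := lt_trans one_pos hp1
  set L : (Fin n → ℝ) → ℝ := fun x => ∑ i, (ℓ₂ i : ℝ) * x i with hLdef
  set N : (Fin n → ℤ) → ℝ := fun g => ∑ i, |(g i : ℝ)| with hNdef
  -- every generator lies in σ
  have hgmem : ∀ g ∈ G, (fun i => (g i : ℝ)) ∈ σ := by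
    intro g hg
    rw [hσ]
    refine ⟨fun h => if h = g then 1 else 0, fun h => by by_cases hh : h = g <;> simp [hh], ?_⟩
    rw [Finset.sum_eq_single g (fun b _ hb => by simp [hb]) (fun h => absurd hg h)]
    simp
  have hN0 : ∀ g, 0 ≤ N g := fun g => Finset.sum_nonneg fun i _ => abs_nonneg _
  set K : ℝ := 1 + ∑ g ∈ G, N g / L (fun i => (g i : ℝ)) with hKdef
  have hK0 : 0 < K := by
    have : 0 ≤ ∑ g ∈ G, N g / L (fun i => (g i : ℝ)) :=
      Finset.sum_nonneg fun g hg => div_nonneg (hN0 g) (h2 _ (hgmem g hg))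
    rw [hKdef]; linarith
  have hKg : ∀ g ∈ G, N g ≤ K * L (fun i => (g i : ℝ)) := by
    intro g hg
    rcases eq_or_lt_of_le (h2 _ (hgmem g hg)) with hz | hpos
    · have hg0 : (fun i => (g i : ℝ)) = 0 := h2' _ (hgmem g hg) hz.symm
      have hN : N g = 0 := by
        refine Finset.sum_eq_zero fun i _ => ?_
        have := congrFun hg0 i
        simp only [Pi.zero_apply] at this
        simp [this]
      rw [hN]
      exact mul_nonneg hK0.le (h2 _ (hgmem g hg))
    · have hle : N g / L (fun i => (g i : ℝ)) ≤ K := by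
        have h1' : N g / L (fun i => (g i : ℝ)) ≤
            ∑ h ∈ G, N h / L (fun i => (h i : ℝ)) :=
          Finset.single_le_sum
            (fun h hh => div_nonneg (hN0 h) (h2 _ (hgmem h hh))) hg
        linarith
      calc N g = (N g / L (fun i => (g i : ℝ))) * L (fun i => (g i : ℝ)) := by
              rw [div_mul_cancel₀ _ (show L (fun i => (g i : ℝ)) ≠ 0 from hpos.ne')]
        _ ≤ K * L (fun i => (g i : ℝ)) :=
              mul_le_mul_of_nonneg_right hle hpos.le
  -- the key lattice-point estimate
  have key : ∀ v : {v : Fin n → ℤ // (fun i => (v i : ℝ)) ∈ σ},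
      (∑ i, (((v : Fin n → ℤ) i).natAbs : ℝ)) ≤ K * L (fun i => ((v : Fin n → ℤ) i : ℝ)) := by
    rintro ⟨v, hv⟩
    rw [hσ] at hv
    obtain ⟨c, hc0, hx⟩ := hv
    have hxi : ∀ i, (v i : ℝ) = ∑ g ∈ G, c g * (g i : ℝ) := by
      intro i
      have := congrFun hx i
      simpa [Finset.sum_apply] using this
    have hLv : L (fun i => (v i : ℝ)) = ∑ g ∈ G, c g * L (fun i => (g i : ℝ)) := by
      simp only [hLdef, hxi, Finset.mul_sum]
      rw [Finset.sum_comm]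
      refine Finset.sum_congr rfl fun g _ => ?_
      refine Finset.sum_congr rfl fun i _ => ?_
      ring
    calc (∑ i, ((v i).natAbs : ℝ)) = ∑ i, |(v i : ℝ)| := by
            simp [Nat.cast_natAbs]
      _ ≤ ∑ i, ∑ g ∈ G, c g * |(g i : ℝ)| := by
            refine Finset.sum_le_sum fun i _ => ?_
            rw [hxi i]
            refine (Finset.abs_sum_le_sum_abs _ _).trans ?_
            exact Finset.sum_le_sum fun g _ => by
              rw [abs_mul, abs_of_nonneg (hc0 g)]
      _ = ∑ g ∈ G, c g * N g := by
            rw [Finset.sum_comm]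
            refine Finset.sum_congr rfl fun g _ => ?_
            rw [hNdef, Finset.mul_sum]
      _ ≤ ∑ g ∈ G, c g * (K * L (fun i => (g i : ℝ))) :=
            Finset.sum_le_sum fun g hg =>
              mul_le_mul_of_nonneg_left (hKg g hg) (hc0 g)
      _ = K * ∑ g ∈ G, c g * L (fun i => (g i : ℝ)) := by
            rw [Finset.mul_sum]
            refine Finset.sum_congr rfl fun g _ => ?_
            ring
      _ = K * L (fun i => (v i : ℝ)) := by rw [hLv]
  -- the comparison series
  set r : ℝ := (p : ℝ) ^ (-(1/K)) with hrdef
  have hr0 : 0 < r := Real.rpow_pos_of_pos hp0 _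
  have hr1 : r < 1 := Real.rpow_lt_one_of_one_lt_of_neg hp1 (neg_neg_of_pos (by positivity))
  refine Summable.of_norm_bounded (g := (fun v : {v : Fin n → ℤ // (fun i => (v i : ℝ)) ∈ σ} =>
      ∏ i, r ^ ((v : Fin n → ℤ) i).natAbs))
    ((igusa_aux_prod_geom n hr0.le hr1).comp_injective Subtype.val_injective)
    fun v => ?_
  set a : ℤ := ∑ i, ℓ₁ i * (v : Fin n → ℤ) i with hadef
  set b : ℤ := ∑ i, ℓ₂ i * (v : Fin n → ℤ) i with hbdef
  have hacast : (a : ℝ) = ∑ i, (ℓ₁ i : ℝ) * ((v : Fin n → ℤ) i : ℝ) := by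
    rw [hadef]; push_cast; rfl
  have hbcast : (b : ℝ) = L (fun i => ((v : Fin n → ℤ) i : ℝ)) := by
    rw [hbdef, hLdef]; push_cast; rfl
  have ha0 : (0:ℝ) ≤ a := by rw [hacast]; exact h1 _ v.2
  have hb0 : (0:ℝ) ≤ b := by rw [hbcast]; exact h2 _ v.2
  have hnorm : ‖(p : ℂ) ^ (-((a : ℂ) * s + (b : ℂ)))‖
      = (p : ℝ) ^ (-((a : ℝ) * s.re + (b : ℝ))) := by
    rw [Complex.norm_natCast_cpow_of_pos hp.pos]
    congr 1
    simp [Complex.add_re, Complex.mul_re]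
  rw [hnorm]
  set M : ℕ := ∑ i, ((v : Fin n → ℤ) i).natAbs with hMdef
  have hMcast : (M : ℝ) = ∑ i, (((v : Fin n → ℤ) i).natAbs : ℝ) := by
    rw [hMdef]; push_cast; rfl
  have hMK : (M : ℝ) / K ≤ (b : ℝ) := by
    rw [div_le_iff₀ hK0, hMcast, hbcast]
    simpa [mul_comm] using key v
  calc (p : ℝ) ^ (-((a : ℝ) * s.re + (b : ℝ)))
      ≤ (p : ℝ) ^ (-((M : ℝ) / K)) := by
        refine (Real.rpow_le_rpow_left_iff hp1).mpr ?_
        have : 0 ≤ (a : ℝ) * s.re := mul_nonneg ha0 hs.le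
        linarith
    _ = ∏ i, r ^ ((v : Fin n → ℤ) i).natAbs := by
        rw [show -((M:ℝ)/K) = (-(1/K)) * (M : ℝ) by ring,
          Real.rpow_mul hp0.le, Real.rpow_natCast, ← hrdef,
          ← Finset.prod_pow_eq_pow_sum]
end

section
/- Let p be a prime, let G ⊆ ℤ^n be a finite set, and let σ ⊆ ℝ^n be the cone of all nonnegative real combinations of elements of G. Let ℓ_1, ℓ_2 ∈ ℤ^n be integer linear functionals such that ⟨ℓ_1, x⟩ ≥ 0 and ⟨ℓ_2, x⟩ ≥ 0 for every x ∈ σ, and such that the only x ∈ σ with ⟨ℓ_2, x⟩ = 0 is x = 0. Then the function Z̄(s) = Σ_{v ∈ σ ∩ ℤ^n} p^{-(⟨ℓ_1,v⟩ s + ⟨ℓ_2,v⟩)} is holomorphic (complex differentiable) on the half-plane { s ∈ ℂ : Re(s) > 0 }. -/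
/-- The Igusa-type zeta function attached to a rational polyhedral cone is
holomorphic on the half-plane `Re s > 0`. -/
theorem igusa_zeta_cone_holomorphic
    (p : ℕ) (hp : p.Prime) (n : ℕ) (G : Finset (Fin n → ℤ))
    (σ : Set (Fin n → ℝ))
    (hσ : σ = {x | ∃ c : (Fin n → ℤ) → ℝ, (∀ g, 0 ≤ c g) ∧
      x = ∑ g ∈ G, c g • (fun i => (g i : ℝ))})
    (ℓ₁ ℓ₂ : Fin n → ℤ)
    (h1 : ∀ x ∈ σ, 0 ≤ ∑ i, (ℓ₁ i : ℝ) * x i)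
    (h2 : ∀ x ∈ σ, 0 ≤ ∑ i, (ℓ₂ i : ℝ) * x i)
    (h2' : ∀ x ∈ σ, ∑ i, (ℓ₂ i : ℝ) * x i = 0 → x = 0) :
    DifferentiableOn ℂ
      (fun s : ℂ => ∑' v : {v : Fin n → ℤ // (fun i => (v i : ℝ)) ∈ σ},
        (p : ℂ) ^ (-(((∑ i, ℓ₁ i * (v : Fin n → ℤ) i : ℤ) : ℂ) * s
          + ((∑ i, ℓ₂ i * (v : Fin n → ℤ) i : ℤ) : ℂ))))
      {s : ℂ | 0 < s.re} := by
  classical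
  have hp2 : 2 ≤ p := hp.two_le
  have hpR : (1:ℝ) < (p:ℝ) := by exact_mod_cast hp.one_lt
  have hpR0 : (0:ℝ) < (p:ℝ) := by positivity
  -- notation
  set A : (Fin n → ℤ) → ℤ := fun v => ∑ i, ℓ₁ i * v i with hA_def
  set B : (Fin n → ℤ) → ℤ := fun v => ∑ i, ℓ₂ i * v i with hB_def
  -- every generator lies in σ
  have hGmem : ∀ g ∈ G, (fun i => ((g : Fin n → ℤ) i : ℝ)) ∈ σ := by
    intro g hg
    rw [hσ]
    refine ⟨fun h => if h = g then 1 else 0, fun h => by by_cases hh : h = g <;> simp [hh], ?_⟩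
    rw [Finset.sum_eq_single_of_mem g hg]
    · simp
    · intro h _ hne; simp [hne]
  -- nonnegativity of A, B on lattice points of σ
  have hA0 : ∀ v : Fin n → ℤ, (fun i => (v i : ℝ)) ∈ σ → 0 ≤ A v := by
    intro v hv
    have := h1 _ hv
    have : (0:ℝ) ≤ ((A v : ℤ) : ℝ) := by
      rw [hA_def]; push_cast; simpa using this
    exact_mod_cast this
  have hB0 : ∀ v : Fin n → ℤ, (fun i => (v i : ℝ)) ∈ σ → 0 ≤ B v := by
    intro v hv
    have := h2 _ hv
    have : (0:ℝ) ≤ ((B v : ℤ) : ℝ) := by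
      rw [hB_def]; push_cast; simpa using this
    exact_mod_cast this
  -- nonzero generators have B ≥ 1
  have hg1 : ∀ g ∈ G, g ≠ 0 → 1 ≤ B g := by
    intro g hg hne
    have h0 : 0 ≤ B g := hB0 g (hGmem g hg)
    rcases lt_or_eq_of_le h0 with h | h
    · exact h
    · exfalso
      have hreal : ∑ i, (ℓ₂ i : ℝ) * ((g i : ℤ) : ℝ) = 0 := by
        have : ((B g : ℤ) : ℝ) = 0 := by rw [← h]; norm_num
        rw [hB_def] at this; push_cast at this; simpa using this
      have := h2' _ (hGmem g hg) hreal
      apply hne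
      funext i
      have := congrFun this i
      simpa using this
  -- coordinate bound constant
  set M : ℕ := G.sup (fun g => Finset.univ.sup fun i => (g i).natAbs) with hM_def
  have hM : ∀ g ∈ G, ∀ i, |g i| ≤ (M : ℤ) := by
    intro g hg i
    rw [Int.abs_eq_natAbs]
    exact_mod_cast le_trans (Finset.le_sup (Finset.mem_univ i))
      (Finset.le_sup (f := fun g : Fin n → ℤ => Finset.univ.sup fun i => (g i).natAbs) hg)
  -- the key coordinate bound for lattice points of σ
  have hkey : ∀ v : Fin n → ℤ, (fun i => (v i : ℝ)) ∈ σ → ∀ i, |v i| ≤ (M : ℤ) * B v := by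
    intro v hv i
    rw [hσ] at hv
    obtain ⟨c, hc, hx⟩ := hv
    have hvi : ∀ j, (v j : ℝ) = ∑ g ∈ G, c g * (g j : ℝ) := by
      intro j
      have := congrFun hx j
      simpa [Finset.sum_apply] using this
    have hBsum : ((B v : ℤ) : ℝ) = ∑ g ∈ G, c g * ((B g : ℤ) : ℝ) := by
      rw [hB_def]
      push_cast
      simp only [hvi, Finset.mul_sum]
      rw [Finset.sum_comm]
      refine Finset.sum_congr rfl fun g _ => ?_
      exact Finset.sum_congr rfl fun j _ => by ring
    have hbd : |(v i : ℝ)| ≤ (M : ℝ) * ((B v : ℤ) : ℝ) := by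
      rw [hvi i]
      calc |∑ g ∈ G, c g * (g i : ℝ)| ≤ ∑ g ∈ G, |c g * (g i : ℝ)| :=
            Finset.abs_sum_le_sum_abs _ _
        _ ≤ ∑ g ∈ G, c g * ((M : ℝ) * ((B g : ℤ) : ℝ)) := by
            refine Finset.sum_le_sum fun g hg => ?_
            rw [abs_mul, abs_of_nonneg (hc g)]
            refine mul_le_mul_of_nonneg_left ?_ (hc g)
            by_cases h0 : g = 0
            · simp [h0, hB_def]
            · have h1g : (1:ℝ) ≤ ((B g : ℤ) : ℝ) := by exact_mod_cast hg1 g hg h0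
              have habs : |(g i : ℝ)| ≤ (M : ℝ) := by
                have := hM g hg i
                have : (|g i| : ℝ) ≤ ((M : ℤ) : ℝ) := by exact_mod_cast this
                simpa using this
              calc |(g i : ℝ)| ≤ (M : ℝ) := habs
                _ = (M : ℝ) * 1 := by ring
                _ ≤ (M : ℝ) * ((B g : ℤ) : ℝ) := by
                    apply mul_le_mul_of_nonneg_left h1g (by positivity)
        _ = (M : ℝ) * ((B v : ℤ) : ℝ) := by
            rw [hBsum, Finset.mul_sum]
            exact Finset.sum_congr rfl fun g _ => by ring
    have : ((|v i| : ℤ) : ℝ) ≤ (((M : ℤ) * B v : ℤ) : ℝ) := by push_cast; push_cast at hbd; simpa using hbd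
    exact_mod_cast this
  -- the majorant
  set r : ℝ := ((p:ℝ))⁻¹ with hr_def
  have hr0 : 0 < r := by positivity
  have hr1 : r < 1 := by
    rw [hr_def, inv_lt_one_iff₀]; right; exact hpR
  set u : {v : Fin n → ℤ // (fun i => (v i : ℝ)) ∈ σ} → ℝ :=
    fun v => r ^ (B v.1).toNat with hu_def
  -- summability of the majorant
  have hF0 : (0:(ℕ × (Fin n → ℤ)) → ℝ) ≤ fun q =>
      if ∀ i, |q.2 i| ≤ (M : ℤ) * q.1 then r ^ q.1 else 0 := by
    intro q; dsimp; split <;> positivity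
  have hFs : Summable (fun q : ℕ × (Fin n → ℤ) =>
      if ∀ i, |q.2 i| ≤ (M : ℤ) * q.1 then r ^ q.1 else 0) := by
    rw [summable_prod_of_nonneg hF0]
    constructor
    · intro b
      apply summable_of_ne_finset_zero
        (s := Fintype.piFinset fun _ : Fin n => Finset.Icc (-((M : ℤ) * b)) ((M : ℤ) * b))
      intro w hw
      dsimp only
      rw [if_neg]
      intro hcon
      apply hw
      rw [Fintype.mem_piFinset]
      intro i
      rw [Finset.mem_Icc]
      constructor
      · linarith [(abs_le.mp (hcon i)).1]
      · exact (abs_le.mp (hcon i)).2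
    · -- bound each inner tsum by card * r^b and compare
      have hcard : ∀ b : ℕ,
          ((Fintype.piFinset fun _ : Fin n => Finset.Icc (-((M : ℤ) * b)) ((M : ℤ) * b)).card : ℝ)
            = ((2 * M * b + 1 : ℕ) : ℝ) ^ n := by
        intro b
        rw [Fintype.card_piFinset]
        simp only [Int.card_Icc]
        have h2' : (M : ℤ) * b + 1 - -((M : ℤ) * b) = ((2 * M * b + 1 : ℕ) : ℤ) := by
          push_cast; ring
        rw [h2', Int.toNat_natCast]
        push_cast
        simp
      have htsum_le : ∀ b : ℕ,
          (∑' w : Fin n → ℤ, if ∀ i, |w i| ≤ (M : ℤ) * b then r ^ b else 0)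
            ≤ ((2 * M + 1 : ℝ)) ^ n * (((b : ℝ) + 1) ^ n * r ^ b) := by
        intro b
        set T := Fintype.piFinset fun _ : Fin n => Finset.Icc (-((M : ℤ) * b)) ((M : ℤ) * b) with hT
        have heq : (∑' w : Fin n → ℤ, if ∀ i, |w i| ≤ (M : ℤ) * b then r ^ b else 0)
            = ∑ w ∈ T, if ∀ i, |w i| ≤ (M : ℤ) * b then r ^ b else 0 := by
          apply tsum_eq_sum
          intro w hw
          rw [if_neg]
          intro hcon
          apply hw
          rw [hT, Fintype.mem_piFinset]
          intro i
          rw [Finset.mem_Icc]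
          exact ⟨by linarith [(abs_le.mp (hcon i)).1], (abs_le.mp (hcon i)).2⟩
        rw [heq]
        calc (∑ w ∈ T, if ∀ i, |w i| ≤ (M : ℤ) * b then r ^ b else 0)
            ≤ ∑ _w ∈ T, r ^ b := by
              refine Finset.sum_le_sum fun w _ => ?_
              split <;> [exact le_refl _; positivity]
          _ = (T.card : ℝ) * r ^ b := by rw [Finset.sum_const, nsmul_eq_mul]
          _ = ((2 * M * b + 1 : ℕ) : ℝ) ^ n * r ^ b := by rw [hcard b]
          _ ≤ ((2 * M + 1 : ℝ)) ^ n * (((b : ℝ) + 1) ^ n * r ^ b) := by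
              rw [← mul_assoc, ← mul_pow]
              apply mul_le_mul_of_nonneg_right _ (by positivity)
              apply pow_le_pow_left₀ (by positivity)
              push_cast
              nlinarith [Nat.cast_nonneg (α := ℝ) M, Nat.cast_nonneg (α := ℝ) b]
      have hgeo : Summable fun b : ℕ => ((b : ℝ) + 1) ^ n * r ^ b := by
        have h1 : Summable fun k : ℕ => (k : ℝ) ^ n * r ^ k := by
          apply summable_pow_mul_geometric_of_norm_lt_one
          rw [Real.norm_eq_abs, abs_of_pos hr0]; exact hr1
        have h2 := h1.comp_injective Nat.succ_injective
        refine (h2.mul_left r⁻¹).congr fun b => ?_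
        simp only [Function.comp_apply, Nat.succ_eq_add_one, pow_succ]
        push_cast
        field_simp
      refine Summable.of_nonneg_of_le (fun b => tsum_nonneg fun w => ?_) htsum_le
        (hgeo.mul_left _)
      split <;> positivity
  have hu : Summable u := by
    have he : Function.Injective
        (fun v : {v : Fin n → ℤ // (fun i => (v i : ℝ)) ∈ σ} => ((B v.1).toNat, v.1)) := by
      intro v w h
      exact Subtype.ext (congrArg Prod.snd h)
    refine (hFs.comp_injective he).congr fun v => ?_
    simp only [Function.comp_apply]
    rw [if_pos]
    intro i
    have hBv := hB0 v.1 v.2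
    have := hkey v.1 v.2 i
    rwa [Int.toNat_of_nonneg hBv]
  -- apply the Weierstrass-type theorem
  apply Complex.differentiableOn_tsum_of_summable_norm hu
  · intro v
    apply Differentiable.differentiableOn
    apply Differentiable.const_cpow _ (Or.inl (by exact_mod_cast hp.ne_zero))
    exact (((differentiable_id.const_mul _).add_const _).neg)
  · exact isOpen_lt continuous_const Complex.continuous_re
  · intro v s hs
    have hAv : (0:ℝ) ≤ (A v.1 : ℝ) := by exact_mod_cast hA0 v.1 v.2
    have hBv : (0:ℝ) ≤ (B v.1 : ℝ) := by exact_mod_cast hB0 v.1 v.2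
    have hsre : 0 < s.re := hs
    have hbase : ((p : ℕ) : ℂ) = (((p : ℝ)) : ℂ) := by push_cast; ring
    rw [hbase]
    rw [Complex.norm_cpow_eq_rpow_re_of_pos hpR0]
    have hre : (-(((A v.1 : ℤ) : ℂ) * s + ((B v.1 : ℤ) : ℂ))).re
        = -((A v.1 : ℝ) * s.re + (B v.1 : ℝ)) := by
      simp [Complex.add_re, Complex.mul_re]
    rw [hre]
    have hstep : (p : ℝ) ^ (-((A v.1 : ℝ) * s.re + (B v.1 : ℝ)))
        ≤ (p : ℝ) ^ (-((B v.1 : ℝ))) := by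
      apply Real.rpow_le_rpow_of_exponent_le (le_of_lt hpR)
      nlinarith
    refine le_trans hstep (le_of_eq ?_)
    show (p:ℝ) ^ (-((B v.1 : ℤ) : ℝ)) = r ^ (B v.1).toNat
    have : ((B v.1).toNat : ℝ) = ((B v.1 : ℤ) : ℝ) := by
      exact_mod_cast congrArg (Int.cast : ℤ → ℝ) (Int.toNat_of_nonneg (hB0 v.1 v.2))
    rw [hr_def, inv_pow, ← Real.rpow_natCast (p:ℝ) (B v.1).toNat, this,
      ← Real.rpow_neg (le_of_lt hpR0)]
end

section
/- Let p be a prime, let v_1, …, v_r ∈ ℤ^n be linearly independent over ℚ, let σ ⊆ ℝ^n be the simplicial cone of all nonnegative real combinations of v_1, …, v_r, and let ℓ_1, ℓ_2 ∈ ℤ^n be integer linear functionals such that ⟨ℓ_1, x⟩ ≥ 0 and ⟨ℓ_2, x⟩ ≥ 0 for every x ∈ σ, and such that the only x ∈ σ with ⟨ℓ_2, x⟩ = 0 is x = 0. Then there exist m ∈ ℕ, integers c_1, …, c_m, and natural numbers α_1, …, α_m and β_1, …, β_m such that for every s ∈ ℂ with Re(s) > 0, (Σ_{v ∈ σ ∩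 ℤ^n} p^{-(⟨ℓ_1,v⟩ s + ⟨ℓ_2,v⟩)}) · ∏_{i=1}^{r} (1 − p^{-(⟨ℓ_1,v_i⟩ s + ⟨ℓ_2,v_i⟩)}) = Σ_{j=1}^{m} c_j · p^{-(α_j s + β_j)}. -/
lemma geom_pi_aux : ∀ (r : ℕ) (q : Fin r → ℂ), (∀ j, ‖q j‖ < 1) →
    Summable (fun k : Fin r → ℕ => ‖∏ j, q j ^ k j‖) ∧
    (∑' k : Fin r → ℕ, ∏ j, q j ^ k j) = ∏ j, (1 - q j)⁻¹ := by
  intro r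
  induction r with
  | zero =>
    intro q hq
    constructor
    · exact .of_finite
    · rw [tsum_eq_single (fun _ => 0) (fun b hb => (hb (funext fun j => j.elim0)).elim)]
      simp
  | succ r ih =>
    intro q hq
    have hq0 := hq 0
    obtain ⟨ihS, ihT⟩ := ih (fun j => q j.succ) (fun j => hq j.succ)
    have hgeo : Summable (fun k : ℕ => ‖q 0 ^ k‖) := by
      simpa [norm_pow] using summable_geometric_of_lt_one (norm_nonneg _) hq0
    have key : ∀ z : ℕ × (Fin r → ℕ),
        (∏ j, q j ^ (Fin.consEquiv (fun _ : Fin (r+1) => ℕ) z) j)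
        = q 0 ^ z.1 * ∏ j : Fin r, q j.succ ^ z.2 j := by
      intro z
      rw [Fin.prod_univ_succ]
      simp [Fin.consEquiv]
    constructor
    · rw [← (Fin.consEquiv (fun _ : Fin (r+1) => ℕ)).summable_iff]
      have : Summable (fun z : ℕ × (Fin r → ℕ) =>
          ‖(q 0 ^ z.1) * ∏ j : Fin r, q j.succ ^ z.2 j‖) := by
        simpa [norm_mul] using (hgeo.mul_norm ihS)
      exact this.congr (by intro z; rw [Function.comp_apply, key z])
    · rw [← (Fin.consEquiv (fun _ : Fin (r+1) => ℕ)).tsum_eq]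
      have := tsum_mul_tsum_of_summable_norm hgeo ihS
      calc (∑' z : ℕ × (Fin r → ℕ), ∏ j, q j ^ (Fin.consEquiv (fun _ : Fin (r+1) => ℕ) z) j)
          = ∑' z : ℕ × (Fin r → ℕ), (q 0 ^ z.1) * ∏ j : Fin r, q j.succ ^ z.2 j :=
            tsum_congr key
        _ = (∑' k : ℕ, q 0 ^ k) * ∑' k : Fin r → ℕ, ∏ j : Fin r, q j.succ ^ k j := this.symm
        _ = ∏ j, (1 - q j)⁻¹ := by
            rw [tsum_geometric_of_norm_lt_one hq0, ihT, Fin.prod_univ_succ]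

/-- Rationality in `p^{-s}` of the zeta function of a simplicial cone: clearing
the denominators attached to the ray generators leaves a finite exponential sum. -/
theorem igusa_zeta_simplicial_cone_rational
    (p : ℕ) (hp : p.Prime) (n r : ℕ) (v : Fin r → Fin n → ℤ)
    (hv : LinearIndependent ℝ (fun j => fun i => (v j i : ℝ)))
    (σ : Set (Fin n → ℝ))
    (hσ : σ = {x | ∃ t : Fin r → ℝ, (∀ j, 0 ≤ t j) ∧
      x = ∑ j, t j • (fun i => (v j i : ℝ))})
    (ℓ₁ ℓ₂ : Fin n → ℤ)
    (h1 : ∀ x ∈ σ, 0 ≤ ∑ i, (ℓ₁ i : ℝ) * x i)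
    (h2 : ∀ x ∈ σ, 0 ≤ ∑ i, (ℓ₂ i : ℝ) * x i)
    (h2' : ∀ x ∈ σ, ∑ i, (ℓ₂ i : ℝ) * x i = 0 → x = 0) :
    ∃ (m : ℕ) (c : Fin m → ℤ) (α β : Fin m → ℕ),
      ∀ s : ℂ, 0 < s.re →
        (∑' x : {x : Fin n → ℤ // (fun i => (x i : ℝ)) ∈ σ},
            (p : ℂ) ^ (-(((∑ i, ℓ₁ i * (x : Fin n → ℤ) i : ℤ) : ℂ) * s
              + ((∑ i, ℓ₂ i * (x : Fin n → ℤ) i : ℤ) : ℂ)))) *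
          ∏ j, (1 - (p : ℂ) ^ (-(((∑ i, ℓ₁ i * v j i : ℤ) : ℂ) * s
              + ((∑ i, ℓ₂ i * v j i : ℤ) : ℂ)))) =
        ∑ j, (c j : ℂ) * (p : ℂ) ^ (-((α j : ℂ) * s + (β j : ℂ))) := by
  classical
  set L1 : (Fin n → ℤ) → ℤ := fun x => ∑ i, ℓ₁ i * x i with hL1
  set L2 : (Fin n → ℤ) → ℤ := fun x => ∑ i, ℓ₂ i * x i with hL2
  set V : Fin r → (Fin n → ℝ) := fun j => fun i => (v j i : ℝ) with hV
  -- uniqueness of coordinates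
  have uniq : ∀ t t' : Fin r → ℝ, ∑ j, t j • V j = ∑ j, t' j • V j → t = t' := by
    intro t t' h
    have := Fintype.linearIndependent_iff.mp hv (t - t') (by
      simpa [sub_smul, Finset.sum_sub_distrib] using sub_eq_zero.mpr h)
    funext j; exact sub_eq_zero.mp (this j)
  -- coercion helper: real image of an integer vector combination
  have coeC : ∀ (w : Fin n → ℤ) (k : Fin r → ℕ),
      (fun i => (((w + ∑ j, (k j : ℤ) • v j) : Fin n → ℤ) i : ℝ))
        = (fun i => (w i : ℝ)) + ∑ j, (k j : ℝ) • V j := by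
    intro w k
    funext i
    simp [Finset.sum_apply, V]
  -- the fundamental domain
  set D : Set (Fin n → ℤ) := {w | ∃ t : Fin r → ℝ, (∀ j, 0 ≤ t j ∧ t j < 1) ∧
      (fun i => (w i : ℝ)) = ∑ j, t j • V j} with hD
  have hDfin : D.Finite := by
    have hsub : D ⊆ Set.pi Set.univ
        (fun i => Set.Icc (-(∑ j, |v j i|)) (∑ j, |v j i|)) := by
      rintro w ⟨t, ht, hw⟩ i _
      have hwi : (w i : ℝ) = ∑ j, t j * (v j i : ℝ) := by
        have := congrFun hw i
        simpa [Finset.sum_apply, V] using this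
      have hb : |(w i : ℝ)| ≤ ∑ j, |(v j i : ℝ)| := by
        rw [hwi]
        refine (Finset.abs_sum_le_sum_abs _ _).trans ?_
        refine Finset.sum_le_sum fun j _ => ?_
        rw [abs_mul, abs_of_nonneg (ht j).1]
        exact mul_le_of_le_one_left (abs_nonneg _) (ht j).2.le
      have hzb : |w i| ≤ ∑ j, |v j i| := by
        have : ((|w i| : ℤ) : ℝ) ≤ ((∑ j, |v j i| : ℤ) : ℝ) := by push_cast; exact hb
        exact_mod_cast this
      exact Set.mem_Icc.mpr (abs_le.mp hzb)
    exact (Set.Finite.pi (fun i => Set.finite_Icc _ _)).subset hsub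
  -- D sits inside σ
  have hDσ : ∀ w ∈ D, (fun i => (w i : ℝ)) ∈ σ := by
    rintro w ⟨t, ht, hw⟩
    rw [hσ]; exact ⟨t, fun j => (ht j).1, hw⟩
  -- each generator is in σ
  have hVσ : ∀ j, V j ∈ σ := by
    intro j
    rw [hσ]
    refine ⟨fun j' => if j' = j then 1 else 0, fun j' => by positivity, ?_⟩
    simp
    rfl
  -- the map F and its bijectivity
  have Fmem : ∀ (w : Fin n → ℤ), w ∈ D → ∀ (k : Fin r → ℕ),
      (fun i => (((w + ∑ j, (k j : ℤ) • v j) : Fin n → ℤ) i : ℝ)) ∈ σ := by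
    rintro w ⟨t, ht, hw⟩ k
    rw [coeC, hσ]
    refine ⟨fun j => t j + k j, fun j => by have := (ht j).1; positivity, ?_⟩
    rw [hw, ← Finset.sum_add_distrib]
    exact Finset.sum_congr rfl fun j _ => by rw [add_smul]
  set F : (↥D × (Fin r → ℕ)) → {x : Fin n → ℤ // (fun i => (x i : ℝ)) ∈ σ} :=
    fun z => ⟨(z.1 : Fin n → ℤ) + ∑ j, (z.2 j : ℤ) • v j, Fmem z.1 z.1.2 z.2⟩ with hF
  have hFbij : Function.Bijective F := by
    constructor
    · rintro ⟨⟨w, tw, htw, hww⟩, k⟩ ⟨⟨w', tw', htw', hww'⟩, k'⟩ hzz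
      have hvec : w + ∑ j, (k j : ℤ) • v j = w' + ∑ j, (k' j : ℤ) • v j :=
        congrArg Subtype.val hzz
      have e1 : (fun i => (((w + ∑ j, (k j : ℤ) • v j) : Fin n → ℤ) i : ℝ))
          = ∑ j, (tw j + (k j : ℝ)) • V j := by
        rw [coeC, hww, ← Finset.sum_add_distrib]
        exact Finset.sum_congr rfl fun j _ => (add_smul _ _ _).symm
      have e2 : (fun i => (((w' + ∑ j, (k' j : ℤ) • v j) : Fin n → ℤ) i : ℝ))
          = ∑ j, (tw' j + (k' j : ℝ)) • V j := by
        rw [coeC, hww', ← Finset.sum_add_distrib]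
        exact Finset.sum_congr rfl fun j _ => (add_smul _ _ _).symm
      have hco : ∀ j, tw j + k j = tw' j + k' j := by
        refine fun j => congrFun (uniq (fun j => tw j + k j) (fun j => tw' j + k' j) ?_) j
        rw [← e1, ← e2, hvec]
      have hk : k = k' := by
        funext j
        have h0 : ⌊tw j⌋ = 0 := Int.floor_eq_zero_iff.mpr ⟨(htw j).1, (htw j).2⟩
        have h0' : ⌊tw' j⌋ = 0 := Int.floor_eq_zero_iff.mpr ⟨(htw' j).1, (htw' j).2⟩
        have : ⌊tw j + (k j : ℝ)⌋ = ⌊tw' j + (k' j : ℝ)⌋ := by rw [hco j]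
        rw [Int.floor_add_natCast, Int.floor_add_natCast, h0, h0'] at this
        simpa using this
      subst hk
      have hw : w = w' := by
        have := hvec
        rwa [add_left_inj] at this
      subst hw
      rfl
    · rintro ⟨x, hx⟩
      rw [hσ] at hx
      obtain ⟨t, ht, hxt⟩ := hx
      set k : Fin r → ℕ := fun j => (⌊t j⌋).toNat with hk
      have hkr : ∀ j, ((k j : ℤ) : ℝ) = (⌊t j⌋ : ℝ) := by
        intro j
        rw [hk]
        norm_cast
        exact Int.toNat_of_nonneg (Int.floor_nonneg.mpr (ht j))
      set w : Fin n → ℤ := x - ∑ j, (k j : ℤ) • v j with hw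
      have hwD : w ∈ D := by
        refine ⟨fun j => Int.fract (t j), fun j => ⟨Int.fract_nonneg _, Int.fract_lt_one _⟩, ?_⟩
        funext i
        have hxi : (x i : ℝ) = ∑ j, t j * (v j i : ℝ) := by
          have := congrFun hxt i
          simpa [Finset.sum_apply, V] using this
        have : (w i : ℝ) = (x i : ℝ) - ∑ j, ((k j : ℤ) : ℝ) * (v j i : ℝ) := by
          rw [hw]; push_cast; simp [Finset.sum_apply]
        rw [this, hxi]
        simp only [Finset.sum_apply, Pi.smul_apply, smul_eq_mul, V]
        rw [← Finset.sum_sub_distrib]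
        refine Finset.sum_congr rfl fun j _ => ?_
        rw [hkr j, Int.fract]
        ring
      refine ⟨⟨⟨w, hwD⟩, k⟩, ?_⟩
      apply Subtype.ext
      show w + ∑ j, (k j : ℤ) • v j = x
      rw [hw]; ring
  -- basic positivity facts
  letI : Fintype ↥D := hDfin.fintype
  have pR1 : (1:ℝ) < (p:ℝ) := by exact_mod_cast hp.one_lt
  have pne : (p:ℂ) ≠ 0 := by exact_mod_cast hp.pos.ne'
  have hL1coe : ∀ x : Fin n → ℤ, ((L1 x : ℤ) : ℝ) = ∑ i, (ℓ₁ i : ℝ) * (x i : ℝ) := by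
    intro x; rw [hL1]; push_cast; rfl
  have hL2coe : ∀ x : Fin n → ℤ, ((L2 x : ℤ) : ℝ) = ∑ i, (ℓ₂ i : ℝ) * (x i : ℝ) := by
    intro x; rw [hL2]; push_cast; rfl
  have ha : ∀ j, 0 ≤ L1 (v j) := by
    intro j
    have := h1 (V j) (hVσ j)
    have h' : (0:ℝ) ≤ ((L1 (v j) : ℤ) : ℝ) := by
      rw [hL1coe]; simpa [hV] using this
    exact_mod_cast h'
  have hb : ∀ j, 1 ≤ L2 (v j) := by
    intro j
    have h0 : (0:ℝ) ≤ ((L2 (v j) : ℤ) : ℝ) := by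
      rw [hL2coe]; simpa [hV] using h2 (V j) (hVσ j)
    have hne : ((L2 (v j) : ℤ) : ℝ) ≠ 0 := by
      intro hzero
      have : V j = 0 := by
        apply h2' (V j) (hVσ j)
        have := hzero
        rw [hL2coe] at this
        simpa [hV] using this
      exact hv.ne_zero j this
    have : (0:ℤ) < L2 (v j) := by
      have : (0:ℝ) < ((L2 (v j) : ℤ) : ℝ) := lt_of_le_of_ne h0 (Ne.symm hne)
      exact_mod_cast this
    omega
  have haw : ∀ w : ↥D, 0 ≤ L1 (w : Fin n → ℤ) := by
    intro w
    have h' : (0:ℝ) ≤ ((L1 (w : Fin n → ℤ) : ℤ) : ℝ) := by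
      rw [hL1coe]; exact h1 _ (hDσ _ w.2)
    exact_mod_cast h'
  have hbw : ∀ w : ↥D, 0 ≤ L2 (w : Fin n → ℤ) := by
    intro w
    have h' : (0:ℝ) ≤ ((L2 (w : Fin n → ℤ) : ℤ) : ℝ) := by
      rw [hL2coe]; exact h2 _ (hDσ _ w.2)
    exact_mod_cast h'
  set eD : Fin (Fintype.card ↥D) ≃ ↥D := (Fintype.equivFin ↥D).symm with heD
  refine ⟨Fintype.card ↥D, fun _ => 1,
    fun j => (L1 ((eD j) : Fin n → ℤ)).toNat, fun j => (L2 ((eD j) : Fin n → ℤ)).toNat, ?_⟩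
  intro s hs
  set q : Fin r → ℂ :=
    fun j => (p:ℂ) ^ (-(((L1 (v j) : ℤ) : ℂ) * s + ((L2 (v j) : ℤ) : ℂ))) with hq
  have hqnorm : ∀ j, ‖q j‖ < 1 := by
    intro j
    rw [hq]
    rw [Complex.norm_natCast_cpow_of_pos hp.pos]
    apply Real.rpow_lt_one_of_one_lt_of_neg pR1
    have hre : (-(((L1 (v j) : ℤ) : ℂ) * s + ((L2 (v j) : ℤ) : ℂ))).re
        = -(((L1 (v j) : ℤ) : ℝ) * s.re + ((L2 (v j) : ℤ) : ℝ)) := by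
      simp [Complex.add_re, Complex.mul_re]
    rw [hre]
    have h1' : (0:ℝ) ≤ ((L1 (v j) : ℤ) : ℝ) := by exact_mod_cast ha j
    have h2'' : (1:ℝ) ≤ ((L2 (v j) : ℤ) : ℝ) := by exact_mod_cast hb j
    nlinarith
  obtain ⟨hSnorm, hT⟩ := geom_pi_aux r q hqnorm
  set g : ↥D → ℂ :=
    fun w => (p:ℂ) ^ (-(((L1 (w : Fin n → ℤ) : ℤ) : ℂ) * s
      + ((L2 (w : Fin n → ℤ) : ℤ) : ℂ))) with hg
  have cpow_sum : ∀ (fs : Fin r → ℂ), (p:ℂ) ^ (∑ j, fs j) = ∏ j, (p:ℂ) ^ fs j := by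
    intro fs
    induction (Finset.univ : Finset (Fin r)) using Finset.cons_induction with
    | empty => simp
    | cons a u hau ih =>
      rw [Finset.sum_cons, Finset.prod_cons, Complex.cpow_add _ _ pne, ih]
  -- linearity of the functionals
  have linL : ∀ (ℓ : Fin n → ℤ) (w : Fin n → ℤ) (k : Fin r → ℕ),
      (∑ i, ℓ i * (w + ∑ j, (k j : ℤ) • v j) i)
        = (∑ i, ℓ i * w i) + ∑ j, (k j : ℤ) * (∑ i, ℓ i * v j i) := by
    intro ℓ w k
    simp only [Pi.add_apply, Finset.sum_apply, Pi.smul_apply, smul_eq_mul, mul_add,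
      Finset.sum_add_distrib, Finset.mul_sum]
    congr 1
    rw [Finset.sum_comm]
    refine Finset.sum_congr rfl fun j _ => ?_
    refine Finset.sum_congr rfl fun i _ => by ring
  have keyF : ∀ z : ↥D × (Fin r → ℕ),
      (p:ℂ) ^ (-(((∑ i, ℓ₁ i * ((F z : Fin n → ℤ)) i : ℤ) : ℂ) * s
        + ((∑ i, ℓ₂ i * ((F z : Fin n → ℤ)) i : ℤ) : ℂ)))
      = g z.1 * ∏ j, q j ^ z.2 j := by
    rintro ⟨w, k⟩
    have hco : (F (w, k) : Fin n → ℤ) = (w : Fin n → ℤ) + ∑ j, (k j : ℤ) • v j := rfl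
    rw [hco, linL ℓ₁, linL ℓ₂]
    have hexp : -((((∑ i, ℓ₁ i * (w:Fin n → ℤ) i) + ∑ j, (k j : ℤ) * (∑ i, ℓ₁ i * v j i) : ℤ) : ℂ) * s
          + (((∑ i, ℓ₂ i * (w:Fin n → ℤ) i) + ∑ j, (k j : ℤ) * (∑ i, ℓ₂ i * v j i) : ℤ) : ℂ))
        = (-(((L1 (w : Fin n → ℤ) : ℤ) : ℂ) * s + ((L2 (w : Fin n → ℤ) : ℤ) : ℂ)))
          + ∑ j, ((k j : ℂ) * (-(((L1 (v j) : ℤ) : ℂ) * s + ((L2 (v j) : ℤ) : ℂ)))) := by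
      have sumneg : ∀ (K A B : Fin r → ℂ),
          ∑ j, K j * -(A j * s + B j) = -((∑ j, K j * A j) * s + ∑ j, K j * B j) := by
        intro K A B
        have hpt : ∀ j ∈ Finset.univ, K j * -(A j * s + B j)
            = -(K j * A j * s) + -(K j * B j) := fun j _ => by ring
        rw [Finset.sum_congr rfl hpt, Finset.sum_add_distrib,
          Finset.sum_neg_distrib, Finset.sum_neg_distrib, Finset.sum_mul]
        ring
      rw [hL1, hL2]
      push_cast
      rw [sumneg]
      ring
    rw [hexp, Complex.cpow_add _ _ pne, cpow_sum]
    rw [hg]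
    congr 1
    refine Finset.prod_congr rfl fun j _ => ?_
    rw [Complex.cpow_nat_mul, hq]
  -- rewrite the tsum through the bijection
  rw [← (Equiv.ofBijective F hFbij).tsum_eq]
  have step1 : (∑' (z : ↥D × (Fin r → ℕ)),
      (p : ℂ) ^ (-(((∑ i, ℓ₁ i * (((Equiv.ofBijective F hFbij) z : Fin n → ℤ)) i : ℤ) : ℂ) * s
        + ((∑ i, ℓ₂ i * (((Equiv.ofBijective F hFbij) z : Fin n → ℤ)) i : ℤ) : ℂ))))
      = (∑ w : ↥D, g w) * ∏ j, (1 - q j)⁻¹ := by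
    have hz : ∀ z : ↥D × (Fin r → ℕ), ((Equiv.ofBijective F hFbij) z) = F z := fun z => rfl
    simp only [hz]
    rw [tsum_congr keyF]
    rw [← tsum_mul_tsum_of_summable_norm (Summable.of_finite) hSnorm]
    rw [tsum_fintype, hT]
  rw [step1]
  have hprodeq : (∏ j, ((1:ℂ) - (p:ℂ) ^ (-(((∑ i, ℓ₁ i * v j i : ℤ) : ℂ) * s
      + ((∑ i, ℓ₂ i * v j i : ℤ) : ℂ))))) = ∏ j, (1 - q j) := by
    refine Finset.prod_congr rfl fun j _ => ?_
    rw [hq, hL1, hL2]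
  rw [hprodeq, mul_assoc, ← Finset.prod_mul_distrib]
  have hcancel : ∀ j ∈ (Finset.univ : Finset (Fin r)), (1 - q j)⁻¹ * (1 - q j) = 1 := by
    intro j _
    refine inv_mul_cancel₀ ?_
    intro h0
    have hq1 : q j = 1 := by linear_combination -h0
    have h1' := hqnorm j
    rw [hq1] at h1'
    simp at h1'
  rw [Finset.prod_congr rfl hcancel, Finset.prod_const_one, mul_one]
  rw [← Equiv.sum_comp eD g]
  refine Finset.sum_congr rfl fun j _ => ?_
  have e1 : (((L1 ((eD j) : Fin n → ℤ)).toNat : ℂ)) = ((L1 ((eD j) : Fin n → ℤ) : ℤ) : ℂ) := by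
    rw [← Int.cast_natCast, Int.toNat_of_nonneg (haw _)]
  have e2 : (((L2 ((eD j) : Fin n → ℤ)).toNat : ℂ)) = ((L2 ((eD j) : Fin n → ℤ) : ℤ) : ℂ) := by
    rw [← Int.cast_natCast, Int.toNat_of_nonneg (hbw _)]
  rw [hg, e1, e2, Int.cast_one, one_mul]
end

section
/- Let p be a prime, n ≥ 1, and let A ⊆ ℕ^n be a finite nonempty set. Let I be the ideal of the polynomial ring ℤ_p[x_1, …, x_n] generated by the monomials x^u = x_1^{u_1} ⋯ x_n^{u_n} for u ∈ A. Then for every y ∈ (ℤ_p)^n, sup { ‖f(y)‖_p : f ∈ I } = max_{u ∈ A} ∏_{i=1}^{n} ‖y_i‖_p^{u_i}, where f(y) denotes the evaluation of the polynomial f at y. In particular, if ‖y_i‖_p = p^{-a_i} for all i, then this common value equals p^{-ν(a)}, where ν(a) = min_{u ∈ A} Σ_{i=1}^{n} u_i a_i. -/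
private lemma padicInt_norm_prod {p : ℕ} [Fact p.Prime] {ι : Type*} (s : Finset ι)
    (f : ι → ℤ_[p]) : ‖∏ i ∈ s, f i‖ = ∏ i ∈ s, ‖f i‖ := by
  classical
  induction s using Finset.induction_on with
  | empty => simp
  | insert _ _ h ih => rw [Finset.prod_insert h, Finset.prod_insert h, norm_mul, ih]

private lemma zpow_finset_sum' (x : ℝ) (hx : x ≠ 0) {ι : Type*} (s : Finset ι) (f : ι → ℤ) :
    x ^ (∑ i ∈ s, f i) = ∏ i ∈ s, x ^ f i := by
  classical
  induction s using Finset.induction_on with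
  | empty => simp
  | insert _ _ h ih => rw [Finset.sum_insert h, Finset.prod_insert h, zpow_add₀ hx, ih]

/-- For a monomial ideal `I ⊆ ℤ_p[x₁,…,xₙ]` generated by the monomials `x^u`,
`u ∈ A`, the supremum of `‖f(y)‖_p` over `f ∈ I` is attained at a generating
monomial, and equals `p^{-ν(a)}` when `‖y_i‖ = p^{-a_i}` for all `i`. -/
theorem monomial_ideal_norm_sup
    (p : ℕ) [Fact p.Prime] (n : ℕ) (hn : 1 ≤ n)
    (A : Finset (Fin n → ℕ)) (hA : A.Nonempty)
    (I : Ideal (MvPolynomial (Fin n) ℤ_[p]))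
    (hI : I = Ideal.span ((fun u : Fin n → ℕ =>
      MvPolynomial.monomial (Finsupp.equivFunOnFinite.symm u) (1 : ℤ_[p])) '' ↑A))
    (y : Fin n → ℤ_[p]) :
    IsGreatest {r : ℝ | ∃ f ∈ I, ‖MvPolynomial.eval y f‖ = r}
      (A.sup' hA fun u => ∏ i, ‖y i‖ ^ (u i)) ∧
    ∀ a : Fin n → ℕ, (∀ i, ‖y i‖ = (p : ℝ) ^ (-(a i : ℤ))) →
      (A.sup' hA fun u => ∏ i, ‖y i‖ ^ (u i)) =
        (p : ℝ) ^ (-((A.inf' hA fun u => ∑ i, u i * a i : ℕ) : ℤ)) := by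
  set M : ℝ := A.sup' hA fun u => ∏ i, ‖y i‖ ^ (u i) with hM
  have hPnorm : ∀ u : Fin n → ℕ,
      ‖MvPolynomial.eval y ((MvPolynomial.monomial (Finsupp.equivFunOnFinite.symm u)) (1 : ℤ_[p]))‖
        = ∏ i, ‖y i‖ ^ (u i) := by
    intro u
    rw [MvPolynomial.eval_monomial, one_mul,
      Finsupp.prod_fintype _ _ (fun i => pow_zero _)]
    simp only [Finsupp.coe_equivFunOnFinite_symm]
    rw [padicInt_norm_prod]
    refine Finset.prod_congr rfl fun i _ => ?_
    rw [← PadicInt.padic_norm_e_of_padicInt, PadicInt.coe_pow, norm_pow,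
      PadicInt.padic_norm_e_of_padicInt]
  obtain ⟨u0, hu0A, hu0⟩ := Finset.exists_mem_eq_sup' hA fun u => ∏ i, ‖y i‖ ^ (u i)
  constructor
  · constructor
    · show ∃ f ∈ I, ‖MvPolynomial.eval y f‖ = M
      refine ⟨_, ?_, by rw [hPnorm]; exact hu0.symm⟩
      rw [hI]
      exact Ideal.subset_span ⟨u0, hu0A, rfl⟩
    · rintro r ⟨f, hf, rfl⟩
      rw [hI] at hf
      refine Submodule.span_induction
        (p := fun f _ => ‖MvPolynomial.eval y f‖ ≤ M) ?_ ?_ ?_ ?_ hf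
      · rintro x ⟨u, huA, rfl⟩
        rw [hPnorm]
        exact Finset.le_sup' (fun u => ∏ i, ‖y i‖ ^ (u i)) huA
      · have : (0:ℝ) ≤ M := by
          rw [hM, hu0]; exact Finset.prod_nonneg fun i _ => by positivity
        simpa using this
      · intro x z _ _ hx hz
        rw [map_add]
        exact le_trans (PadicInt.nonarchimedean _ _) (max_le hx hz)
      · intro c x _ hx
        rw [smul_eq_mul, map_mul, norm_mul]
        calc ‖MvPolynomial.eval y c‖ * ‖MvPolynomial.eval y x‖
            ≤ 1 * M := mul_le_mul (PadicInt.norm_le_one _) hx (norm_nonneg _)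
              zero_le_one
          _ = M := one_mul M
  · intro a ha
    have hp1 : (1:ℝ) < p := by exact_mod_cast (Fact.out : p.Prime).one_lt
    have hp0 : (p:ℝ) ≠ 0 := by positivity
    have key : ∀ u : Fin n → ℕ,
        (∏ i, ‖y i‖ ^ (u i)) = (p : ℝ) ^ (-((∑ i, u i * a i : ℕ) : ℤ)) := by
      intro u
      have : ∀ i, ‖y i‖ ^ (u i) = (p:ℝ) ^ ((-(a i : ℤ)) * u i) := by
        intro i
        rw [ha i, ← zpow_natCast ((p:ℝ) ^ (-(a i : ℤ))), ← zpow_mul]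
      simp_rw [this]
      rw [← zpow_finset_sum' _ hp0]
      congr 1
      push_cast
      rw [← Finset.sum_neg_distrib]
      exact Finset.sum_congr rfl fun i _ => by ring
    rw [hM]
    have hsup : (A.sup' hA fun u => ∏ i, ‖y i‖ ^ (u i))
        = A.sup' hA fun u => (p : ℝ) ^ (-((∑ i, u i * a i : ℕ) : ℤ)) := by
      apply Finset.sup'_congr hA rfl
      intro u _
      exact key u
    rw [hsup]
    apply le_antisymm
    · apply Finset.sup'_le
      intro u huA
      have h1 : (A.inf' hA fun u => ∑ i, u i * a i : ℕ) ≤ ∑ i, u i * a i :=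
        Finset.inf'_le _ huA
      exact zpow_le_zpow_right₀ hp1.le (neg_le_neg (Int.ofNat_le.mpr h1))
    · obtain ⟨v, hvA, hv⟩ := Finset.exists_mem_eq_inf' hA fun u => ∑ i, u i * a i
      have h2 := Finset.le_sup'
        (fun u : Fin n → ℕ => (p : ℝ) ^ (-((∑ i, u i * a i : ℕ) : ℤ))) hvA
      rw [show (-((A.inf' hA fun u => ∑ i, u i * a i : ℕ) : ℤ))
          = -((∑ i, v i * a i : ℕ) : ℤ) from by rw [hv]]
      exact h2
end

section
/- Let p be a prime, n ≥ 1, and let A ⊆ ℕ^n be a finite nonempty set with 0 ∉ A. Let μ be the Haar probability measure on (ℤ_p)^n, and for a ∈ ℕ^n set ν(a) = min_{u ∈ A} Σ_{i=1}^{n} u_i a_i. Then for every s ∈ ℂ with Re(s) > 0: (1) the function y ↦ (max_{u ∈ A} ∏_{i=1}^{n} ‖y_i‖_p^{u_i})^{s} (real base raised to the complex power s via Complex.cpow, with the convention 0^s = 0) is integrable with respect to μ; (2) the family a ∈ ℕ^n ↦ p^{-(Σ_i a_i + s·ν(a))} is summable; and (3) ∫_{(ℤ_p)^n} (max_{u ∈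 A} ∏_i ‖y_i‖_p^{u_i})^{s} dμ(y) = (1 − 1/p)^n · Σ_{a ∈ ℕ^n} p^{-(Σ_i a_i + s·ν(a))}. -/
open MeasureTheory

open scoped ENNReal NNReal

-- (aux lemmas assumed: IgusaAux.*)

variable {p : ℕ} [hp : Fact p.Prime] [MeasurableSpace ℤ_[p]] [BorelSpace ℤ_[p]]
  (ν : Measure ℤ_[p]) [ν.IsAddHaarMeasure] [IsProbabilityMeasure ν]

set_option maxHeartbeats 800000
namespace IgusaAux

lemma ball_m (a : ℕ) : MeasurableSet {x : ℤ_[p] | ‖x‖ ≤ (p:ℝ)^(-(a:ℤ))} :=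
  (measurableSet_Iic (a := (p:ℝ)^(-(a:ℤ)))).preimage measurable_norm

lemma coset_meas (c : ℤ_[p]) (a : ℕ) :
    ν {x : ℤ_[p] | ‖x - c‖ ≤ (p:ℝ)^(-(a:ℤ))} = ν {x : ℤ_[p] | ‖x‖ ≤ (p:ℝ)^(-(a:ℤ))} := by
  have h : {x : ℤ_[p] | ‖x - c‖ ≤ (p:ℝ)^(-(a:ℤ))}
      = (fun x => -c + x) ⁻¹' {x : ℤ_[p] | ‖x‖ ≤ (p:ℝ)^(-(a:ℤ))} := by
    ext x; simp only [Set.mem_preimage, Set.mem_setOf_eq, ← sub_eq_neg_add]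
  rw [h, measure_preimage_add]

lemma ball_meas (a : ℕ) :
    ν {x : ℤ_[p] | ‖x‖ ≤ (p:ℝ)^(-(a:ℤ))} = ((p:ℝ≥0∞)^a)⁻¹ := by
  set B := {x : ℤ_[p] | ‖x‖ ≤ (p:ℝ)^(-(a:ℤ))} with hB
  have hp0 : (p:ℝ≥0∞) ≠ 0 := Nat.cast_ne_zero.2 hp.out.pos.ne'
  have hpa : ((p:ℝ≥0∞)^a) ≠ 0 := pow_ne_zero a hp0
  have hpat : ((p:ℝ≥0∞)^a) ≠ ⊤ := ENNReal.pow_ne_top (ENNReal.natCast_ne_top p)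
  have key : ((p:ℝ≥0∞)^a) * ν B = 1 := by
    have hcover : (Set.univ : Set ℤ_[p])
        = ⋃ r ∈ Finset.range (p^a), {x : ℤ_[p] | ‖x - (r:ℤ_[p])‖ ≤ (p:ℝ)^(-(a:ℤ))} := by
      ext x
      simp only [Set.mem_univ, Set.mem_iUnion, Finset.mem_range, true_iff, Set.mem_setOf_eq]
      refine ⟨x.appr a, x.appr_lt a, ?_⟩
      exact (PadicInt.norm_le_pow_iff_mem_span_pow _ a).2 (x.appr_spec a)
    have hdisj : (↑(Finset.range (p^a)) : Set ℕ).PairwiseDisjoint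
        (fun r : ℕ => {x : ℤ_[p] | ‖x - (r:ℤ_[p])‖ ≤ (p:ℝ)^(-(a:ℤ))}) := by
      intro r hr r' hr' hne
      simp only [Finset.coe_range, Set.mem_Iio] at hr hr'
      refine Set.disjoint_left.2 fun x hx hx' => hne ?_
      simp only [Set.mem_setOf_eq] at hx hx'
      have hna := PadicInt.nonarchimedean (x - (r':ℤ_[p])) (-(x - (r:ℤ_[p])))
      rw [norm_neg] at hna
      have hnorm : ‖((((r:ℤ) - (r':ℤ)) : ℤ) : ℤ_[p])‖ ≤ (p:ℝ)^(-(a:ℤ)) := by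
        have heq : ((((r:ℤ) - (r':ℤ)) : ℤ) : ℤ_[p]) = (x - (r':ℤ_[p])) + -(x - (r:ℤ_[p])) := by
          push_cast; ring
        rw [heq]
        exact le_trans hna (max_le hx' hx)
      have hdvd : ((p:ℤ)^a) ∣ ((r:ℤ) - (r':ℤ)) := PadicInt.norm_int_le_pow_iff_dvd.1 hnorm
      have hz : ((r:ℤ) - (r':ℤ)) = 0 := by
        refine Int.eq_zero_of_abs_lt_dvd hdvd ?_
        rw [abs_sub_lt_iff]
        have hcast : ((p:ℤ))^a = ((p^a:ℕ):ℤ) := by push_cast; ring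
        constructor <;> omega
      have : ((r:ℤ) = (r':ℤ)) := by omega
      exact_mod_cast this
    have hmeas : ∀ r ∈ Finset.range (p^a),
        MeasurableSet {x : ℤ_[p] | ‖x - (r:ℤ_[p])‖ ≤ (p:ℝ)^(-(a:ℤ))} := by
      intro r _
      exact (measurableSet_Iic (a := (p:ℝ)^(-(a:ℤ)))).preimage
        ((continuous_id.sub continuous_const).norm.measurable)
    have h1 : (1 : ℝ≥0∞) = ∑ r ∈ Finset.range (p^a),
        ν {x : ℤ_[p] | ‖x - (r:ℤ_[p])‖ ≤ (p:ℝ)^(-(a:ℤ))} := by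
      rw [← measure_biUnion_finset hdisj hmeas, ← hcover, measure_univ]
    have h2 : ∑ r ∈ Finset.range (p^a),
        ν {x : ℤ_[p] | ‖x - (r:ℤ_[p])‖ ≤ (p:ℝ)^(-(a:ℤ))} = ((p^a : ℕ) : ℝ≥0∞) * ν B :=
      calc ∑ r ∈ Finset.range (p^a), ν {x : ℤ_[p] | ‖x - (r:ℤ_[p])‖ ≤ (p:ℝ)^(-(a:ℤ))}
          = ∑ _r ∈ Finset.range (p^a), ν B :=
            Finset.sum_congr rfl (fun r _ => coset_meas ν (r:ℤ_[p]) a)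
        _ = ((p^a : ℕ) : ℝ≥0∞) * ν B := by
            rw [Finset.sum_const, Finset.card_range, nsmul_eq_mul]
    rw [h2] at h1
    rw [show ((p:ℝ≥0∞)^a) = ((p^a:ℕ):ℝ≥0∞) by push_cast; ring, ← h1]
  calc ν B = ((p:ℝ≥0∞)^a)⁻¹ * (((p:ℝ≥0∞)^a) * ν B) := by
        rw [← mul_assoc, ENNReal.inv_mul_cancel hpa hpat, one_mul]
    _ = ((p:ℝ≥0∞)^a)⁻¹ := by rw [key, mul_one]


lemma singleton_meas (c : ℤ_[p]) : ν {c} = 0 := by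
  have hb : ∀ a : ℕ, ν {c} ≤ ((p:ℝ≥0∞)^a)⁻¹ := by
    intro a
    have hsub : ({c} : Set ℤ_[p]) ⊆ {x : ℤ_[p] | ‖x - c‖ ≤ (p:ℝ)^(-(a:ℤ))} := by
      intro x hx
      have hxc : x = c := hx
      show ‖x - c‖ ≤ (p:ℝ)^(-(a:ℤ))
      rw [hxc, sub_self, norm_zero]
      positivity
    exact le_trans (measure_mono hsub) (le_of_eq ((coset_meas ν c a).trans (ball_meas ν a)))
  have htend : Filter.Tendsto (fun a : ℕ => ((p:ℝ≥0∞)^a)⁻¹) Filter.atTop (nhds 0) := by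
    simp_rw [ENNReal.inv_pow]
    refine ENNReal.tendsto_pow_atTop_nhds_zero_of_lt_one (ENNReal.inv_lt_one.2 ?_)
    exact_mod_cast hp.out.one_lt
  exact le_antisymm (ge_of_tendsto' htend hb) (zero_le)

lemma sphere_meas (a : ℕ) :
    ν {x : ℤ_[p] | ‖x‖ = (p:ℝ)^(-(a:ℤ))} = ((p:ℝ≥0∞)^a)⁻¹ - ((p:ℝ≥0∞)^(a+1))⁻¹ := by
  have hiff : ∀ x : ℤ_[p], ‖x‖ ≤ (p:ℝ)^(-((a+1:ℕ):ℤ)) ↔ ‖x‖ < (p:ℝ)^(-(a:ℤ)) := by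
    intro x
    have := PadicInt.norm_le_pow_iff_norm_lt_pow_add_one x (-(a:ℤ) - 1)
    rw [show (-(a:ℤ) - 1 + 1) = -(a:ℤ) by ring] at this
    rw [show (-((a+1:ℕ):ℤ)) = -(a:ℤ) - 1 by push_cast; ring]
    exact this
  have hsub : {x : ℤ_[p] | ‖x‖ ≤ (p:ℝ)^(-((a+1:ℕ):ℤ))} ⊆ {x : ℤ_[p] | ‖x‖ ≤ (p:ℝ)^(-(a:ℤ))} :=
    fun x hx => le_of_lt ((hiff x).1 hx)
  have hset : {x : ℤ_[p] | ‖x‖ = (p:ℝ)^(-(a:ℤ))}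
      = {x : ℤ_[p] | ‖x‖ ≤ (p:ℝ)^(-(a:ℤ))} \ {x : ℤ_[p] | ‖x‖ ≤ (p:ℝ)^(-((a+1:ℕ):ℤ))} := by
    ext x
    simp only [Set.mem_setOf_eq, Set.mem_diff, hiff x, not_lt]
    constructor
    · intro h; exact ⟨le_of_eq h, le_of_eq h.symm⟩
    · intro h; exact le_antisymm h.1 h.2
  rw [hset, measure_diff hsub (ball_m (a+1)).nullMeasurableSet (measure_ne_top ν _),
    ball_meas, ball_meas]

lemma sphere_meas_toReal (a : ℕ) :
    (ν {x : ℤ_[p] | ‖x‖ = (p:ℝ)^(-(a:ℤ))}).toReal = (1 - (p:ℝ)⁻¹) * ((p:ℝ)⁻¹)^a := by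
  have hp0 : (p:ℝ≥0∞) ≠ 0 := Nat.cast_ne_zero.2 hp.out.pos.ne'
  have hp1 : (1:ℝ≥0∞) ≤ (p:ℝ≥0∞) := by exact_mod_cast hp.out.one_le
  have hle : ((p:ℝ≥0∞)^(a+1))⁻¹ ≤ ((p:ℝ≥0∞)^a)⁻¹ :=
    ENNReal.inv_le_inv.2 (pow_le_pow_right₀ hp1 (Nat.le_succ a))
  have hfin : ((p:ℝ≥0∞)^(a+1))⁻¹ ≠ ⊤ :=
    ENNReal.inv_ne_top.2 (pow_ne_zero _ hp0)
  rw [sphere_meas, ENNReal.toReal_sub_of_le hle (ENNReal.inv_ne_top.2 (pow_ne_zero a hp0))]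
  have hpR : (0:ℝ) < (p:ℝ) := by exact_mod_cast hp.out.pos
  rw [ENNReal.toReal_inv, ENNReal.toReal_inv, ENNReal.toReal_pow, ENNReal.toReal_pow,
    ENNReal.toReal_natCast]
  rw [pow_succ, mul_inv, inv_pow]
  ring

lemma sup'_antitone {β : Type*} (A : Finset β) (hA : A.Nonempty) (f : β → ℕ) {g : ℕ → ℝ}
    (hg : Antitone g) :
    A.sup' hA (fun u => g (f u)) = g (A.inf' hA f) := by
  apply le_antisymm
  · exact Finset.sup'_le _ _ fun u hu => hg (Finset.inf'_le _ hu)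
  · obtain ⟨u₀, hu₀, he⟩ := Finset.exists_mem_eq_inf' hA f
    rw [he]
    exact Finset.le_sup' (fun u => g (f u)) hu₀

end IgusaAux

set_option maxHeartbeats 1200000


/-- The Igusa zeta function of a monomial ideal as a lattice sum
(Proposition 2.1 / formula (2.4)): integrability of the zeta integrand,
summability of the lattice family, and the identity
`Z_I(s) = (1 - 1/p)^n Σ_{a ∈ ℕ^n} p^{-(⟨e,a⟩ + s ν(a))}`. -/
theorem igusa_zeta_monomial_ideal_eq_lattice_sum
    (p : ℕ) [Fact p.Prime] (n : ℕ) (hn : 1 ≤ n)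
    [MeasurableSpace ℤ_[p]] [BorelSpace ℤ_[p]]
    (ν : Measure ℤ_[p]) [ν.IsAddHaarMeasure] [IsProbabilityMeasure ν]
    (μ : Measure (Fin n → ℤ_[p])) (hμ : μ = Measure.pi fun _ => ν)
    (A : Finset (Fin n → ℕ)) (hA : A.Nonempty) (h0 : 0 ∉ A)
    (s : ℂ) (hs : 0 < s.re) :
    Integrable (fun y : Fin n → ℤ_[p] =>
      ((A.sup' hA fun u => ∏ i, ‖y i‖ ^ (u i) : ℝ) : ℂ) ^ s) μ ∧
    Summable (fun a : Fin n → ℕ =>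
      (p : ℂ) ^ (-(((∑ i, a i : ℕ) : ℂ)
        + s * ((A.inf' hA fun u => ∑ i, u i * a i : ℕ) : ℂ)))) ∧
    ∫ y : Fin n → ℤ_[p],
        ((A.sup' hA fun u => ∏ i, ‖y i‖ ^ (u i) : ℝ) : ℂ) ^ s ∂μ =
      (1 - 1 / (p : ℂ)) ^ n *
      ∑' a : Fin n → ℕ, (p : ℂ) ^ (-(((∑ i, a i : ℕ) : ℂ)
        + s * ((A.inf' hA fun u => ∑ i, u i * a i : ℕ) : ℂ))) := by
  classical
  subst hμ
  have hp : Fact p.Prime := inferInstance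
  have hp1 : 1 < p := hp.out.one_lt
  have hpR : (0:ℝ) < p := by exact_mod_cast hp.out.pos
  have hpR1 : (1:ℝ) < p := by exact_mod_cast hp1
  set q : ℝ := (p:ℝ)⁻¹ with hqdef
  have hq0 : (0:ℝ) ≤ q := by positivity
  have hq1 : q ≤ 1 := by
    rw [hqdef]
    rw [inv_le_one_iff₀]; right; exact le_of_lt hpR1
  have hs0 : s ≠ 0 := fun h => by simp [h] at hs
  have hpC : (p:ℂ) ≠ 0 := Nat.cast_ne_zero.2 hp.out.pos.ne'
  -- the real-valued sup function
  set G : (Fin n → ℤ_[p]) → ℝ :=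
    fun y => (A.sup' hA fun u => ∏ i, ‖y i‖ ^ (u i) : ℝ) with hGdef
  set f : (Fin n → ℤ_[p]) → ℂ := fun y => ((G y : ℝ) : ℂ) ^ s with hfdef
  have hG0 : ∀ y, 0 ≤ G y := by
    intro y
    obtain ⟨u₀, hu₀⟩ := hA
    exact le_trans (Finset.prod_nonneg fun i _ => pow_nonneg (norm_nonneg _) _)
      (Finset.le_sup' (fun u => ∏ i, ‖y i‖ ^ (u i)) hu₀)
  have hG1 : ∀ y, G y ≤ 1 := by
    intro y
    refine Finset.sup'_le _ _ fun u _ => Finset.prod_le_one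
      (fun i _ => pow_nonneg (norm_nonneg _) _)
      (fun i _ => pow_le_one₀ (norm_nonneg _) (PadicInt.norm_le_one _))
  have hGmeas : Measurable G := by
    have : G = (A.sup' hA fun (u : Fin n → ℕ) => fun y : Fin n → ℤ_[p] =>
        ∏ i, ‖y i‖ ^ (u i)) := by
      funext y
      rw [hGdef, Finset.sup'_apply]
    rw [this]
    refine Finset.sup'_induction hA _ (fun g₁ h₁ g₂ h₂ => h₁.sup h₂) (fun u _ => ?_)
    exact Finset.measurable_prod Finset.univ
      (fun i _ => ((measurable_pi_apply i).norm).pow_const (u i))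
  have hfmeas : Measurable f := by
    have hfeq : f = fun y => if G y = 0 then 0 else
        Complex.exp (((Real.log (G y) : ℝ) : ℂ) * s) := by
      funext y
      by_cases h : G y = 0
      · simp [hfdef, h, Complex.zero_cpow hs0]
      · rw [hfdef]
        simp only [h, if_false]
        rw [Complex.cpow_def_of_ne_zero (by exact_mod_cast h), Complex.ofReal_log (hG0 y)]
    rw [hfeq]
    exact Measurable.ite (hGmeas (measurableSet_singleton 0)) measurable_const
      (Complex.measurable_exp.comp
        ((Complex.measurable_ofReal.comp (Real.measurable_log.comp hGmeas)).mul_const s))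
  have hfbd : ∀ y, ‖f y‖ ≤ 1 := by
    intro y
    show ‖((G y : ℝ) : ℂ) ^ s‖ ≤ 1
    rcases eq_or_lt_of_le (hG0 y) with h | h
    · rw [← h, Complex.ofReal_zero, Complex.zero_cpow hs0, norm_zero]; exact zero_le_one
    · rw [Complex.norm_cpow_eq_rpow_re_of_pos h]
      exact Real.rpow_le_one (le_of_lt h) (hG1 y) (le_of_lt hs)
  have hInt : Integrable f (Measure.pi fun _ => ν) := by
    refine Integrable.mono' (integrable_const 1) hfmeas.aestronglyMeasurable ?_
    exact Filter.Eventually.of_forall hfbd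
  -- the decomposition by spheres
  set S : ℕ → Set ℤ_[p] := fun a => {x : ℤ_[p] | ‖x‖ = (p:ℝ)^(-(a:ℤ))} with hSdef
  have hSmeas : ∀ a, MeasurableSet (S a) :=
    fun a => (measurableSet_singleton ((p:ℝ)^(-(a:ℤ)))).preimage measurable_norm
  set T : (Fin n → ℕ) → Set (Fin n → ℤ_[p]) :=
    fun a => Set.univ.pi fun i => S (a i) with hTdef
  have hTmeas : ∀ a, MeasurableSet (T a) :=
    fun a => MeasurableSet.univ_pi fun i => hSmeas (a i)
  have hTdisj : Pairwise (Function.onFun Disjoint T) := by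
    intro a b hab
    refine Set.disjoint_left.2 fun y hya hyb => hab ?_
    funext i
    have h1 : ‖y i‖ = (p:ℝ)^(-(a i:ℤ)) := hya i (Set.mem_univ i)
    have h2 : ‖y i‖ = (p:ℝ)^(-(b i:ℤ)) := hyb i (Set.mem_univ i)
    have := (zpow_right_strictMono₀ hpR1).injective (h1.symm.trans h2)
    omega
  set U : Set (Fin n → ℤ_[p]) := ⋃ a, T a with hUdef
  have hUmeas : MeasurableSet U := MeasurableSet.iUnion hTmeas
  haveI : NullSingletonClass ν := ⟨fun x => IgusaAux.singleton_meas ν x⟩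
  have hUc : (Measure.pi fun _ => ν) Uᶜ = 0 := by
    have hsub : Uᶜ ⊆ ⋃ i, Function.eval i ⁻¹' ({0} : Set ℤ_[p]) := by
      intro y hy
      by_contra h
      change y ∉ _ at h
      simp only [Set.mem_iUnion, not_exists, Set.mem_preimage, Set.mem_singleton_iff] at h
      apply hy
      refine Set.mem_iUnion.2 ⟨fun i => (y i).valuation, fun i _ => ?_⟩
      show ‖y i‖ = (p:ℝ)^(-(((y i).valuation : ℕ):ℤ))
      exact PadicInt.norm_eq_zpow_neg_valuation (h i)
    refine measure_mono_null hsub (measure_iUnion_null fun i => ?_)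
    exact Measure.pi_hyperplane _ i 0
  -- cell values
  set v : (Fin n → ℕ) → ℕ := fun a => A.inf' hA fun u => ∑ i, u i * a i with hvdef
  set C : (Fin n → ℕ) → ℂ := fun a => ((q ^ (v a) : ℝ) : ℂ) ^ s with hCdef
  have hganti : Antitone (fun m : ℕ => q ^ m) :=
    fun m k h => pow_le_pow_of_le_one hq0 hq1 h
  have hconst : ∀ a : Fin n → ℕ, Set.EqOn f (fun _ => C a) (T a) := by
    intro a y hy
    have hnorm : ∀ i, ‖y i‖ = q ^ (a i) := by
      intro i
      have h1 : ‖y i‖ = (p:ℝ)^(-(a i:ℤ)) := hy i (Set.mem_univ i)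
      rw [h1, zpow_neg, zpow_natCast, hqdef, inv_pow]
    have hGy : G y = q ^ (v a) := by
      rw [hGdef]
      have : (fun u : Fin n → ℕ => ∏ i, ‖y i‖ ^ (u i))
          = fun u : Fin n → ℕ => q ^ (∑ i, u i * a i) := by
        funext u
        simp_rw [hnorm, ← pow_mul]
        rw [Finset.prod_pow_eq_pow_sum]
        congr 1
        exact Finset.sum_congr rfl fun i _ => Nat.mul_comm _ _
      simp_rw [this]
      exact IgusaAux.sup'_antitone A hA (fun u => ∑ i, u i * a i) hganti
    show ((G y : ℝ) : ℂ) ^ s = ((q ^ (v a) : ℝ) : ℂ) ^ s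
    rw [hGy]
  have hcell : ∀ a : Fin n → ℕ, ∫ y in T a, f y ∂(Measure.pi fun _ => ν)
      = (((1-q)^n * q^(∑ i, a i) : ℝ)) • C a := by
    intro a
    rw [setIntegral_congr_fun (hTmeas a) (hconst a), setIntegral_const]
    congr 1
    rw [hTdef]
    show ((Measure.pi fun _ => ν) (Set.univ.pi fun i => S (a i))).toReal = _
    rw [Measure.pi_pi, ENNReal.toReal_prod]
    have : ∀ i : Fin n, (ν (S (a i))).toReal = (1 - q) * q ^ (a i) := by
      intro i
      rw [hSdef]
      exact IgusaAux.sphere_meas_toReal ν (a i)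
    rw [Finset.prod_congr rfl fun i _ => this i, Finset.prod_mul_distrib,
      Finset.prod_const, Finset.card_univ, Fintype.card_fin,
      Finset.prod_pow_eq_pow_sum]
  -- identify terms with the lattice sum terms
  set g : (Fin n → ℕ) → ℂ := fun a =>
    (p : ℂ) ^ (-(((∑ i, a i : ℕ) : ℂ) + s * ((v a : ℕ) : ℂ))) with hgdef
  set K : ℂ := (1 - 1/(p:ℂ))^n with hKdef
  have hterm : ∀ a : Fin n → ℕ,
      (((1-q)^n * q^(∑ i, a i) : ℝ)) • C a = K * g a := by
    intro a
    have hqk : ∀ m : ℕ, ((q ^ m : ℝ) : ℂ) = (p:ℂ) ^ (-(m:ℂ)) := by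
      intro m
      rw [Complex.cpow_neg, Complex.cpow_natCast]
      push_cast [hqdef]
      rw [inv_pow]
    have hCval : C a = (p:ℂ) ^ (-(s * ((v a : ℕ) : ℂ))) := by
      show ((q ^ (v a) : ℝ) : ℂ) ^ s = _
      have h1 : (q ^ (v a) : ℝ) = (p:ℝ) ^ (-(v a : ℝ)) := by
        rw [Real.rpow_neg (le_of_lt hpR), Real.rpow_natCast, hqdef, inv_pow]
      rw [h1, ← Complex.cpow_mul_ofReal_nonneg (le_of_lt hpR)]
      congr 1
      push_cast
      ring
    rw [hCval]
    show (((1-q)^n * q^(∑ i, a i) : ℝ) : ℂ) * _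
      = K * (p : ℂ) ^ (-(((∑ i, a i : ℕ) : ℂ) + s * ((v a : ℕ) : ℂ)))
    rw [Complex.ofReal_mul, hqk (∑ i, a i), neg_add, Complex.cpow_add _ _ hpC]
    have hKq : (((1-q)^n : ℝ) : ℂ) = K := by
      rw [hKdef]
      push_cast [hqdef]
      rw [one_div]
    rw [hKq]
    ring
  -- hasSum
  have hexh : ∫ y in U, f y ∂(Measure.pi fun _ => ν) = ∫ y, f y ∂(Measure.pi fun _ => ν) := by
    have := integral_add_compl hUmeas hInt (f := f)
    rw [setIntegral_measure_zero f hUc, add_zero] at this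
    exact this
  have hHS : HasSum (fun a : Fin n → ℕ => K * g a)
      (∫ y, f y ∂(Measure.pi fun _ => ν)) := by
    have h := hasSum_integral_iUnion hTmeas hTdisj hInt.integrableOn
    rw [← hUdef, hexh] at h
    have h2 : (fun a : Fin n → ℕ => ∫ y in T a, f y ∂(Measure.pi fun _ => ν))
        = fun a => K * g a := funext fun a => (hcell a).trans (hterm a)
    rw [h2] at h
    exact h
  have hKne : K ≠ 0 := by
    rw [hKdef]
    apply pow_ne_zero
    have hp1C : (p:ℂ) ≠ 1 := by exact_mod_cast Nat.ne_of_gt hp1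
    intro h
    rw [sub_eq_zero, eq_comm, div_eq_one_iff_eq hpC] at h
    exact hp1C h.symm
  have hSummable : Summable g := by
    have h1 : Summable (fun a : Fin n → ℕ => K * g a) := hHS.summable
    have h2 := h1.mul_left K⁻¹
    refine h2.congr fun a => ?_
    rw [← mul_assoc, inv_mul_cancel₀ hKne, one_mul]
  refine ⟨hInt, hSummable, ?_⟩
  show ∫ y, f y ∂(Measure.pi fun _ => ν) = K * ∑' a, g a
  rw [← hHS.tsum_eq]
  exact tsum_mul_left
end

section
/- Let n ≥ 1, let A ⊆ ℕ^n be a finite nonempty set, let P = convexHull(A) + ℝ_{≥0}^n ⊆ ℝ^n be the Newton polyhedron, and for v ∈ ℝ^n with v_i ≥ 0 for all i set ν(v) = min_{u ∈ A} ⟨u, v⟩. Suppose v ∈ ℤ^n with v ≠ 0 and v_i ≥ 0 for all i is such that the face F_v = { u ∈ P : ⟨u, v⟩ = ν(v) } has affine span of dimension n − 1 (i.e., F_v is a facet of P). If there exists an index i such that F_v ⊆ { u ∈ ℝ^n : u_i = 0 }, then v is a positive real multiple of the standard basis vector e_i and ν(v) = 0; in particular, if moreover the greatest common divisor of the coordinates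 of v is 1, then v = e_i. -/
/-!
The facet `F` lies in the hyperplane `⟨·, v⟩ = ν(v)` and in the coordinate hyperplane `u_i = 0`.
Its affine span has codimension one, so its direction is the kernel of both linear forms, which
are therefore proportional: `v` is a multiple of `e_i`. A point of `A` realising the minimum `ν(v)`
lies on `F`, hence has `u_i = 0`, and so `ν(v) = v_i u_i = 0`.
-/

open Pointwise Module LinearMap

section Hyperplane

variable {K V : Type*} [Field K] [AddCommGroup V] [Module K V]

theorem Module.Dual.exists_eq_smul_of_ker_le {f g : Dual K V} (h : ker g ≤ ker f) :
    ∃ t : K, f = t • g := by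
  have hf : f ∈ Submodule.span K (Set.range fun _ : Unit => g) :=
    mem_span_of_iInf_ker_le_ker (by simpa using h)
  obtain ⟨t, ht⟩ := Submodule.mem_span_singleton.1 (by simpa using hf)
  exact ⟨t, ht.symm⟩

theorem direction_affineSpan_le_ker_of_forall_eq {s : Set V} {f : Dual K V} {c : K}
    (hs : ∀ x ∈ s, f x = c) : (affineSpan K s).direction ≤ ker f := by
  rw [direction_affineSpan, vectorSpan_def, Submodule.span_le]
  rintro _ ⟨x, hx, y, hy, rfl⟩
  simp [hs x hx, hs y hy]

variable [FiniteDimensional K V]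

theorem direction_affineSpan_eq_ker_of_forall_eq {s : Set V} {f : Dual K V} (hf : f ≠ 0)
    {c : K} (hs : ∀ x ∈ s, f x = c)
    (hdim : finrank K (affineSpan K s).direction = finrank K V - 1) :
    (affineSpan K s).direction = ker f := by
  refine Submodule.eq_of_le_of_finrank_le (direction_affineSpan_le_ker_of_forall_eq hs) ?_
  have := Module.Dual.finrank_ker_add_one_of_ne_zero hf
  omega

theorem exists_eq_smul_of_forall_eq_of_finrank_direction {s : Set V} {f g : Dual K V}
    (hg : g ≠ 0) {c d : K} (hsf : ∀ x ∈ s, f x = c) (hsg : ∀ x ∈ s, g x = d)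
    (hdim : finrank K (affineSpan K s).direction = finrank K V - 1) :
    ∃ t : K, f = t • g :=
  Module.Dual.exists_eq_smul_of_ker_le <|
    direction_affineSpan_eq_ker_of_forall_eq hg hsg hdim ▸
      direction_affineSpan_le_ker_of_forall_eq hsf

end Hyperplane

theorem eq_smul_single_of_dotProductEquiv_eq_smul_proj {K ι : Type*} [Field K] [Fintype ι]
    [DecidableEq ι] {w : ι → K} {i : ι} {t : K}
    (h : dotProductEquiv K ι w = t • (proj i : (ι → K) →ₗ[K] K)) :
    w = t • Pi.single i 1 :=
  funext fun j => by
    simpa [Pi.single_apply, eq_comm] using LinearMap.congr_fun h (Pi.single j 1)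

theorem Finset.univ_gcd_pi_single {ι α : Type*} [Fintype ι] [DecidableEq ι]
    [CommMonoidWithZero α] [NormalizedGCDMonoid α] (i : ι) (a : α) :
    univ.gcd (Pi.single i a) = normalize a := by
  have hrest : (univ.erase i).gcd (Pi.single i a) = 0 :=
    gcd_eq_zero_iff.2 fun j hj => by simp [ne_of_mem_erase hj]
  rw [← insert_erase (mem_univ i), gcd_insert, hrest, Pi.single_eq_same, gcd_zero_right]

theorem facet_in_coordinate_hyperplane_general
    (n : ℕ) (A : Finset (Fin n → ℕ)) (hA : A.Nonempty)
    (P : Set (Fin n → ℝ))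
    (hP : P = convexHull ℝ ((fun (u : Fin n → ℕ) (i : Fin n) => (u i : ℝ)) '' ↑A)
      + {x : Fin n → ℝ | ∀ i, 0 ≤ x i})
    (v : Fin n → ℤ) (hv0 : v ≠ 0) (hvnn : ∀ i, 0 ≤ v i)
    (F : Set (Fin n → ℝ))
    (hF : F = {u ∈ P | ∑ i, u i * (v i : ℝ) =
      ((A.inf' hA fun u => ∑ i, (u i : ℤ) * v i : ℤ) : ℝ)})
    (hfacet : Module.finrank ℝ (affineSpan ℝ F).direction = n - 1)
    (i : Fin n) (hsub : F ⊆ {u : Fin n → ℝ | u i = 0}) :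
    (∃ t : ℝ, 0 < t ∧ (fun j => (v j : ℝ)) = t • (Pi.single i 1 : Fin n → ℝ)) ∧
    (A.inf' hA fun u => ∑ j, (u j : ℤ) * v j) = 0 ∧
    (Finset.univ.gcd v = 1 → v = Pi.single i 1) := by
  set ν : ℤ := A.inf' hA fun u => ∑ j, (u j : ℤ) * v j
  have hproj : (proj i : (Fin n → ℝ) →ₗ[ℝ] ℝ) ≠ 0 := fun h => by
    simpa using LinearMap.congr_fun h (Pi.single i 1)
  have hFv : ∀ x ∈ F, dotProductEquiv ℝ (Fin n) (fun j => (v j : ℝ)) x = ν := fun x hx => by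
    rw [hF] at hx
    simpa [dotProduct, mul_comm] using hx.2
  obtain ⟨t, ht⟩ := exists_eq_smul_of_forall_eq_of_finrank_direction hproj hFv
    (fun x hx => hsub hx) (by simpa using hfacet)
  replace ht := eq_smul_single_of_dotProductEquiv_eq_smul_proj ht
  have hv : v = Pi.single i (v i) := funext fun j => by
    have := congrFun ht j
    rcases eq_or_ne j i with rfl | hj <;> simp_all
  have hvt : (v i : ℝ) = t := by simpa using congrFun ht i
  have hvi : 0 < v i := (hvnn i).lt_of_ne fun h => hv0 (by rw [hv, ← h, Pi.single_zero])
  have hν : ν = 0 := by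
    obtain ⟨u₀, hu₀A, hu₀⟩ := A.exists_mem_eq_inf' hA fun u => ∑ j, (u j : ℤ) * v j
    have hu₀F : (fun j => (u₀ j : ℝ)) ∈ F := by
      rw [hF, hP]
      refine ⟨⟨_, subset_convexHull ℝ _ ⟨u₀, hu₀A, rfl⟩, 0, fun _ => le_rfl, add_zero _⟩, ?_⟩
      rw [show ν = _ from hu₀]
      push_cast
      rfl
    have hu₀i : u₀ i = 0 := by simpa using hsub hu₀F
    rw [show ν = _ from hu₀, hv]
    simp [Pi.single_apply, hu₀i]
  refine ⟨⟨t, hvt ▸ Int.cast_pos.2 hvi, ht⟩, hν, fun hgcd => ?_⟩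
  rw [hv, Finset.univ_gcd_pi_single, Int.normalize_of_nonneg hvi.le] at hgcd
  rw [hv, hgcd]

/-- A facet of the Newton polyhedron contained in a coordinate hyperplane
`{u_i = 0}` is cut out by a positive multiple of the standard basis vector
`e_i`, and the corresponding value of the support function is `0`; if moreover
the normal vector is primitive, it equals `e_i`. -/
theorem facet_in_coordinate_hyperplane
    (n : ℕ) (hn : 1 ≤ n) (A : Finset (Fin n → ℕ)) (hA : A.Nonempty)
    (P : Set (Fin n → ℝ))
    (hP : P = convexHull ℝ ((fun (u : Fin n → ℕ) (i : Fin n) => (u i : ℝ)) '' ↑A)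
      + {x : Fin n → ℝ | ∀ i, 0 ≤ x i})
    (v : Fin n → ℤ) (hv0 : v ≠ 0) (hvnn : ∀ i, 0 ≤ v i)
    (F : Set (Fin n → ℝ))
    (hF : F = {u ∈ P | ∑ i, u i * (v i : ℝ) =
      ((A.inf' hA fun u => ∑ i, (u i : ℤ) * v i : ℤ) : ℝ)})
    (hfacet : Module.finrank ℝ (affineSpan ℝ F).direction = n - 1)
    (i : Fin n) (hsub : F ⊆ {u : Fin n → ℝ | u i = 0}) :
    (∃ t : ℝ, 0 < t ∧ (fun j => (v j : ℝ)) = t • (Pi.single i 1 : Fin n → ℝ)) ∧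
    (A.inf' hA fun u => ∑ j, (u j : ℤ) * v j) = 0 ∧
    (Finset.univ.gcd v = 1 → v = Pi.single i 1) :=
  facet_in_coordinate_hyperplane_general n A hA P hP v hv0 hvnn F hF hfacet i hsub
end
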